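/- arXiv:1306.1188 — 4 statements merged into one kernel-verified Lean document; each statement's English description precedes it below -/
import Mathlib

section
/- For all positive integers m, n and all 0 < s < r there exist constants c, C > 0, depending only on m, n and r/s, with the following property. Let π₀, π ⊂ ℝ^{m+n} be m-dimensional linear subspaces with ‖p_π − p_{π₀}‖ ≤ c, where p_π, p_{π₀} denote the orthogonal projections onto π and π₀ and ‖·‖ the operator norm. Let f : B_r(π₀) → π₀^⊥ be Lipschitz with Lip(f) ≤ c and sup|f| ≤ c r, where B_r(π₀) is the closed ball of radius r centered at 0 in π₀. Then there exists a Lipschitz map g : B_s(π) → π^⊥ such that {x + f(x) : x ∈ B_r(π₀)} ∩ {z ∈ ℝ^{m+n} : p_π(z) ∈ B_s(π)} = {y + g(y) : y ∈ B_s(π)}, sup|g| ≤ C r ‖p_π − p_{π₀}‖ + C sup|f|, and Lip(g) ≤ C ‖p_π − p_{π₀}‖ + C Lip(f). -/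
/-!
Write `D = p_π - p_{π₀}`. Since `p_{π₀}(x + f x) = x`, the graph point `x + f x` projects onto
`π` as `x + D(x + f x)`, and the correction `x ↦ D(x + f x)` is `‖D‖(1 + Lip f)`-Lipschitz, so it
is small. Hence `x ↦ p_π(x + f x)` is bi-Lipschitz onto its image, and the Banach fixed point
theorem applied to `x ↦ p_{π₀}(y - D(x + f x))` on `B_r(π₀)` shows that every `y ∈ B_s(π)` is
hit. The value `g y` is then the `π^⊥`-component `f x - D(x + f x)` of the unique graph point
over `y`, which gives both estimates.
-/

open Module Metric Function

noncomputable def projL {N : ℕ} (π : Submodule ℝ (EuclideanSpace ℝ (Fin N))) :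
    EuclideanSpace ℝ (Fin N) →L[ℝ] EuclideanSpace ℝ (Fin N) :=
  π.subtypeL.comp (Submodule.orthogonalProjection π)

theorem exists_isFixedPt_of_dist_le_mul_on_closedBall {X : Type*} [MetricSpace X]
    [CompleteSpace X] {T : X → X} {a : X} {ρ q : ℝ} (hq₀ : 0 ≤ q) (hq : q < 1)
    (hT : ∀ x ∈ closedBall a ρ, ∀ x' ∈ closedBall a ρ, dist (T x) (T x') ≤ q * dist x x')
    (ha : dist (T a) a ≤ (1 - q) * ρ) :
    ∃ x ∈ closedBall a ρ, IsFixedPt T x := by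
  have ha_mem : a ∈ closedBall a ρ :=
    mem_closedBall_self (nonneg_of_mul_nonneg_right (dist_nonneg.trans ha) (by linarith))
  have hmaps : Set.MapsTo T (closedBall a ρ) (closedBall a ρ) := fun x hx =>
    calc dist (T x) a ≤ dist (T x) (T a) + dist (T a) a := dist_triangle _ _ _
      _ ≤ q * ρ + (1 - q) * ρ := by
        gcongr
        exact (hT x hx a ha_mem).trans (mul_le_mul_of_nonneg_left hx hq₀)
      _ = ρ := by ring
  have hcontr : ContractingWith ⟨q, hq₀⟩ (hmaps.restrict T _ _) :=
    ⟨hq, (LipschitzOnWith.of_dist_le_mul hT).mapsToRestrict hmaps⟩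
  obtain ⟨x, hx, hfix, -⟩ :=
    hcontr.exists_fixedPoint' isClosed_closedBall.isComplete hmaps ha_mem (edist_ne_top _ _)
  exact ⟨x, hx, hfix⟩

section GraphReparametrization

variable {E : Type*} [NormedAddCommGroup E] [InnerProductSpace ℝ E] {P₀ : Submodule ℝ E}

def graphMap (f : P₀ → P₀ᗮ) (x : P₀) : E := x + f x

theorem norm_graphMap_le (f : P₀ → P₀ᗮ) (x : P₀) : ‖graphMap f x‖ ≤ ‖x‖ + ‖f x‖ :=
  norm_add_le _ _

theorem norm_graphMap_sub_le {f : P₀ → P₀ᗮ} {K : ℝ} {x x' : P₀}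
    (hf : ‖f x - f x'‖ ≤ K * ‖x - x'‖) :
    ‖graphMap f x - graphMap f x'‖ ≤ (1 + K) * ‖x - x'‖ :=
  calc ‖graphMap f x - graphMap f x'‖ = ‖((x - x' : P₀) : E) + ((f x - f x' : P₀ᗮ) : E)‖ := by
        simp only [graphMap, Submodule.coe_sub]; abel_nf
    _ ≤ ‖x - x'‖ + K * ‖x - x'‖ := (norm_add_le _ _).trans (add_le_add_right hf _)
    _ = (1 + K) * ‖x - x'‖ := by ring

variable {P : Submodule ℝ E} [P.HasOrthogonalProjection]

theorem graph_inter_eq_graph_of_rightInverse {f : P₀ → P₀ᗮ} {ψ : P → P₀} {r s : ℝ}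
    (hψr : ∀ y : P, ‖y‖ ≤ s → ‖ψ y‖ ≤ r)
    (hψ : ∀ y : P, ‖y‖ ≤ s → P.starProjection (graphMap f (ψ y)) = y)
    (hinj : ∀ x x' : P₀, ‖x‖ ≤ r → ‖x'‖ ≤ r →
      P.starProjection (graphMap f x) = P.starProjection (graphMap f x') → x = x') :
    ({z : E | ∃ x : P₀, ‖x‖ ≤ r ∧ z = graphMap f x} ∩ {z : E | ‖P.starProjection z‖ ≤ s}) =
      {z : E | ∃ y : P, ‖y‖ ≤ s ∧
        z = y + (Pᗮ.orthogonalProjectionOnto (graphMap f (ψ y)) : E)} := by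
  have hgraph : ∀ y : P, ‖y‖ ≤ s →
      (y : E) + Pᗮ.orthogonalProjectionOnto (graphMap f (ψ y)) = graphMap f (ψ y) :=
    fun y hy => by
      conv_lhs => rw [← hψ y hy]
      exact P.starProjection_add_starProjection_orthogonal _
  ext z
  constructor
  · rintro ⟨⟨x, hx, rfl⟩, hz⟩
    set y := P.orthogonalProjectionOnto (graphMap f x)
    have hy : ‖y‖ ≤ s := hz
    have hψx : ψ y = x := hinj _ _ (hψr y hy) hx (hψ y hy)
    exact ⟨y, hy, by rw [hgraph y hy, hψx]⟩
  · rintro ⟨y, hy, rfl⟩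
    rw [hgraph y hy]
    refine ⟨⟨ψ y, hψr y hy, rfl⟩, ?_⟩
    show ‖P.starProjection (graphMap f (ψ y))‖ ≤ s
    rwa [hψ y hy]

section

variable [P₀.HasOrthogonalProjection]

variable (P₀ P) in
theorem starProjection_graphMap (f : P₀ → P₀ᗮ) (x : P₀) :
    P.starProjection (graphMap f x) =
      x + (P.starProjection - P₀.starProjection) (graphMap f x) := by
  have : P₀.starProjection (graphMap f x) = x :=
    Submodule.eq_starProjection_of_mem_orthogonal' x.2 (f x).2 rfl
  rw [sub_apply, this]
  abel

variable (P) in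
theorem starProjection_orthogonal_graphMap (f : P₀ → P₀ᗮ) (x : P₀) :
    Pᗮ.starProjection (graphMap f x) =
      f x - (P.starProjection - P₀.starProjection) (graphMap f x) := by
  rw [Submodule.starProjection_orthogonal_val, starProjection_graphMap P₀ P, graphMap]
  abel

theorem norm_starProjection_sub_apply_graphMap_sub_le {f : P₀ → P₀ᗮ} {K : ℝ} {x x' : P₀}
    (hf : ‖f x - f x'‖ ≤ K * ‖x - x'‖) :
    ‖(P.starProjection - P₀.starProjection) (graphMap f x) -
        (P.starProjection - P₀.starProjection) (graphMap f x')‖ ≤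
      ‖P.starProjection - P₀.starProjection‖ * (1 + K) * ‖x - x'‖ := by
  rw [← map_sub, mul_assoc]
  exact ((P.starProjection - P₀.starProjection).le_opNorm _).trans
    (mul_le_mul_of_nonneg_left (norm_graphMap_sub_le hf) (norm_nonneg _))

theorem mul_norm_sub_le_norm_starProjection_graphMap_sub {f : P₀ → P₀ᗮ} {K : ℝ} {x x' : P₀}
    (hf : ‖f x - f x'‖ ≤ K * ‖x - x'‖) :
    (1 - ‖P.starProjection - P₀.starProjection‖ * (1 + K)) * ‖x - x'‖ ≤
      ‖P.starProjection (graphMap f x) - P.starProjection (graphMap f x')‖ := by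
  have hsplit : ((x - x' : P₀) : E) =
      (P.starProjection (graphMap f x) - P.starProjection (graphMap f x')) -
        ((P.starProjection - P₀.starProjection) (graphMap f x) -
          (P.starProjection - P₀.starProjection) (graphMap f x')) := by
    rw [starProjection_graphMap P₀ P, starProjection_graphMap P₀ P, Submodule.coe_sub]
    abel
  have hle : ‖x - x'‖ ≤ ‖P.starProjection (graphMap f x) - P.starProjection (graphMap f x')‖ +
      ‖(P.starProjection - P₀.starProjection) (graphMap f x) -
        (P.starProjection - P₀.starProjection) (graphMap f x')‖ := by
    rw [Submodule.coe_norm, hsplit]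
    exact norm_sub_le _ _
  linarith [norm_starProjection_sub_apply_graphMap_sub_le (P := P) hf]

theorem eq_zero_of_mem_of_starProjection_eq_zero {v : E} (hv : v ∈ P)
    (hv₀ : P₀.starProjection v = 0) (hPP₀ : ‖P.starProjection - P₀.starProjection‖ < 1) :
    v = 0 := by
  have hfix : (P.starProjection - P₀.starProjection) v = v := by
    rw [sub_apply, hv₀, sub_zero, Submodule.starProjection_eq_self_iff.mpr hv]
  have hle := (P.starProjection - P₀.starProjection).le_opNorm v
  rw [hfix] at hle
  exact norm_eq_zero.mp (by nlinarith [norm_nonneg v])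

end

variable [CompleteSpace P₀]

theorem exists_norm_le_starProjection_graphMap_eq {f : P₀ → P₀ᗮ}
    {r s K : ℝ} (hK : 0 ≤ K)
    (hf : ∀ x x' : P₀, ‖x‖ ≤ r → ‖x'‖ ≤ r → ‖f x - f x'‖ ≤ K * ‖x - x'‖)
    (hPP₀ : ‖P.starProjection - P₀.starProjection‖ * (1 + K) < 1)
    (hroom : s + ‖P.starProjection - P₀.starProjection‖ * ‖f 0‖ ≤
      (1 - ‖P.starProjection - P₀.starProjection‖ * (1 + K)) * r)
    {y : P} (hy : ‖y‖ ≤ s) :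
    ∃ x : P₀, ‖x‖ ≤ r ∧ P.starProjection (graphMap f x) = y := by
  set D := P.starProjection - P₀.starProjection
  -- at a fixed point, `y - p_π(x + f x) ∈ π` is killed by `p_{π₀}`, hence vanishes
  let T : P₀ → P₀ := fun x => P₀.orthogonalProjectionOnto (y - D (graphMap f x))
  have hT : ∀ x ∈ closedBall 0 r, ∀ x' ∈ closedBall 0 r,
      dist (T x) (T x') ≤ ‖D‖ * (1 + K) * dist x x' := by
    intro x hx x' hx'
    rw [mem_closedBall_zero_iff] at hx hx'
    rw [dist_eq_norm, dist_eq_norm, ← map_sub, sub_sub_sub_cancel_left, ← norm_neg, ← map_neg,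
      neg_sub]
    exact (P₀.norm_orthogonalProjectionOnto_apply_le _).trans
      (norm_starProjection_sub_apply_graphMap_sub_le (hf x x' hx hx'))
  have hT₀ : dist (T 0) 0 ≤ (1 - ‖D‖ * (1 + K)) * r := by
    have hF₀ : ‖graphMap f 0‖ = ‖f 0‖ := by simp [graphMap]
    calc dist (T 0) 0 ≤ ‖(y : E) - D (graphMap f 0)‖ := by
          rw [dist_zero_right]; exact P₀.norm_orthogonalProjectionOnto_apply_le _
      _ ≤ ‖y‖ + ‖D‖ * ‖f 0‖ :=
          (norm_sub_le _ _).trans (add_le_add le_rfl (hF₀ ▸ D.le_opNorm _))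
      _ ≤ _ := by linarith
  obtain ⟨x, hx, hfix⟩ := exists_isFixedPt_of_dist_le_mul_on_closedBall
    (by positivity) hPP₀ hT hT₀
  refine ⟨x, mem_closedBall_zero_iff.mp hx, ?_⟩
  have hD : ‖D‖ < 1 := lt_of_le_of_lt (le_mul_of_one_le_right (norm_nonneg _) (by linarith)) hPP₀
  have hv₀ : P₀.starProjection ((y : E) - P.starProjection (graphMap f x)) = 0 := by
    rw [starProjection_graphMap P₀ P, sub_add_eq_sub_sub_swap, map_sub,
      Submodule.starProjection_eq_self_iff.mpr x.2]
    exact sub_eq_zero.mpr (congrArg Subtype.val hfix)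
  exact (sub_eq_zero.mp (eq_zero_of_mem_of_starProjection_eq_zero
    (P.sub_mem y.2 (P.starProjection_apply_mem _)) hv₀ hD)).symm

theorem exists_graph_reparametrization (f : P₀ → P₀ᗮ) {r s K M : ℝ}
    (hr : 0 ≤ r) (hK : 0 ≤ K)
    (hf : ∀ x x' : P₀, ‖x‖ ≤ r → ‖x'‖ ≤ r → ‖f x - f x'‖ ≤ K * ‖x - x'‖)
    (hfM : ∀ x : P₀, ‖x‖ ≤ r → ‖f x‖ ≤ M)
    (hPP₀ : ‖P.starProjection - P₀.starProjection‖ * (1 + K) ≤ 1 / 2)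
    (hroom : s + ‖P.starProjection - P₀.starProjection‖ * M ≤
      (1 - ‖P.starProjection - P₀.starProjection‖ * (1 + K)) * r) :
    ∃ g : P → Pᗮ,
      ({z : E | ∃ x : P₀, ‖x‖ ≤ r ∧ z = graphMap f x} ∩ {z : E | ‖P.starProjection z‖ ≤ s}) =
        {z : E | ∃ y : P, ‖y‖ ≤ s ∧ z = y + g y} ∧
      (∀ y : P, ‖y‖ ≤ s →
        ‖g y‖ ≤ M + ‖P.starProjection - P₀.starProjection‖ * (r + M)) ∧
      (∀ y y' : P, ‖y‖ ≤ s → ‖y'‖ ≤ s →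
        ‖g y - g y'‖ ≤
          2 * (K + ‖P.starProjection - P₀.starProjection‖ * (1 + K)) * ‖y - y'‖) := by
  set D := P.starProjection - P₀.starProjection
  have hbase : ∀ y : P, ‖y‖ ≤ s → ∃ x : P₀, ‖x‖ ≤ r ∧ P.starProjection (graphMap f x) = y :=
    fun y hy => exists_norm_le_starProjection_graphMap_eq hK hf (by linarith)
      (by nlinarith [hfM 0 (by simpa using hr), norm_nonneg D]) hy
  choose! ψ hψr hψ using hbase
  have hlower : ∀ x x' : P₀, ‖x‖ ≤ r → ‖x'‖ ≤ r →
      ‖x - x'‖ ≤ 2 * ‖P.starProjection (graphMap f x) - P.starProjection (graphMap f x')‖ :=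
    fun x x' hx hx' => by
      nlinarith [mul_norm_sub_le_norm_starProjection_graphMap_sub (P := P) (hf x x' hx hx'),
        norm_nonneg (x - x')]
  have hψlip : ∀ y y' : P, ‖y‖ ≤ s → ‖y'‖ ≤ s → ‖ψ y - ψ y'‖ ≤ 2 * ‖y - y'‖ :=
    fun y y' hy hy' => by simpa [hψ y hy, hψ y' hy'] using hlower _ _ (hψr y hy) (hψr y' hy')
  set g : P → Pᗮ := fun y => Pᗮ.orthogonalProjectionOnto (graphMap f (ψ y))
  have hg : ∀ y, (g y : E) = f (ψ y) - D (graphMap f (ψ y)) :=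
    fun y => starProjection_orthogonal_graphMap P f (ψ y)
  refine ⟨g, graph_inter_eq_graph_of_rightInverse hψr hψ fun x x' hx hx' hxx' => ?_,
    fun y hy => ?_, fun y y' hy hy' => ?_⟩
  · simpa [hxx', sub_eq_zero] using hlower x x' hx hx'
  · calc ‖g y‖ = ‖(f (ψ y) : E) - D (graphMap f (ψ y))‖ := congrArg norm (hg y)
      _ ≤ M + ‖D‖ * (r + M) := (norm_sub_le _ _).trans <| add_le_add (hfM _ (hψr y hy)) <|
          (D.le_opNorm _).trans <| mul_le_mul_of_nonneg_left
            ((norm_graphMap_le f _).trans (add_le_add (hψr y hy) (hfM _ (hψr y hy))))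
            (norm_nonneg D)
  · have hx := hf _ _ (hψr y hy) (hψr y' hy')
    calc ‖g y - g y'‖ = ‖((f (ψ y) - f (ψ y') : P₀ᗮ) : E) -
          (D (graphMap f (ψ y)) - D (graphMap f (ψ y')))‖ := by
          rw [Submodule.coe_norm, Submodule.coe_sub, hg, hg, Submodule.coe_sub]; abel_nf
      _ ≤ K * ‖ψ y - ψ y'‖ + ‖D‖ * (1 + K) * ‖ψ y - ψ y'‖ :=
          (norm_sub_le _ _).trans (add_le_add hx (norm_starProjection_sub_apply_graphMap_sub_le hx))
      _ = (K + ‖D‖ * (1 + K)) * ‖ψ y - ψ y'‖ := by ring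
      _ ≤ (K + ‖D‖ * (1 + K)) * (2 * ‖y - y'‖) :=
          mul_le_mul_of_nonneg_left (hψlip y y' hy hy') (by positivity)
      _ = 2 * (K + ‖D‖ * (1 + K)) * ‖y - y'‖ := by ring

end GraphReparametrization

theorem projL_eq_starProjection {N : ℕ} (π : Submodule ℝ (EuclideanSpace ℝ (Fin N))) :
    projL π = π.starProjection :=
  rfl

theorem graphical_reparametrization_general (m n : ℕ) (s r : ℝ) (hs : 0 < s) (hsr : s < r) :
    ∃ c C : ℝ, 0 < c ∧ 0 < C ∧
      ∀ π₀ π : Submodule ℝ (EuclideanSpace ℝ (Fin (m + n))),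
        finrank ℝ π₀ = m → finrank ℝ π = m →
        ‖projL π - projL π₀‖ ≤ c →
        ∀ (f : π₀ → π₀ᗮ) (K M : ℝ), 0 ≤ K → K ≤ c → 0 ≤ M → M ≤ c * r →
          (∀ x y : π₀, ‖x‖ ≤ r → ‖y‖ ≤ r → ‖f x - f y‖ ≤ K * ‖x - y‖) →
          (∀ x : π₀, ‖x‖ ≤ r → ‖f x‖ ≤ M) →
          ∃ g : π → πᗮ,
            ({z : EuclideanSpace ℝ (Fin (m + n)) |
                ∃ x : π₀, ‖x‖ ≤ r ∧ z = (x : EuclideanSpace ℝ (Fin (m + n))) + (f x : EuclideanSpace ℝ (Fin (m + n)))} ∩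
              {z : EuclideanSpace ℝ (Fin (m + n)) | ‖projL π z‖ ≤ s}) =
              {z : EuclideanSpace ℝ (Fin (m + n)) |
                ∃ y : π, ‖y‖ ≤ s ∧ z = (y : EuclideanSpace ℝ (Fin (m + n))) + (g y : EuclideanSpace ℝ (Fin (m + n)))} ∧
            (∀ y : π, ‖y‖ ≤ s → ‖g y‖ ≤ C * r * ‖projL π - projL π₀‖ + C * M) ∧
            (∀ y y' : π, ‖y‖ ≤ s → ‖y'‖ ≤ s →
              ‖g y - g y'‖ ≤ (C * ‖projL π - projL π₀‖ + C * K) * ‖y - y'‖) := by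
  have hr : 0 < r := hs.trans hsr
  have hcr : (r - s) / (4 * r) * r = (r - s) / 4 := by field_simp
  set c := (r - s) / (4 * r)
  have hc : 0 < c := div_pos (by linarith) (by linarith)
  have hc4 : c ≤ 1 / 4 := by nlinarith
  refine ⟨c, 4, hc, by norm_num, ?_⟩
  simp only [projL_eq_starProjection]
  intro π₀ π _ _ hε f K M hK hKc hM hMc hf hfM
  set ε := ‖π.starProjection - π₀.starProjection‖
  have hε₀ : 0 ≤ ε := norm_nonneg _
  have hεK : ε * (1 + K) ≤ c * (1 + c) := mul_le_mul hε (by linarith) (by linarith) hc.le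
  have hsmall : ε * (1 + K) ≤ 1 / 2 := by nlinarith
  have hroom : s + ε * M ≤ (1 - ε * (1 + K)) * r := by
    nlinarith [mul_le_mul hε hMc hM hc.le, mul_le_mul_of_nonneg_right hεK hr.le]
  obtain ⟨g, hgraph, hsup, hlip⟩ :=
    exists_graph_reparametrization f hr.le hK hf hfM hsmall hroom
  refine ⟨g, hgraph, fun y hy => (hsup y hy).trans ?_,
    fun y y' hy hy' => (hlip y y' hy hy').trans (mul_le_mul_of_nonneg_right ?_ (norm_nonneg _))⟩
  · nlinarith [mul_le_mul_of_nonneg_right (hε.trans hc4) hM]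
  · nlinarith [mul_le_mul_of_nonneg_left (hKc.trans hc4) hε₀]

/-- For all positive integers `m, n` and all `0 < s < r` there exist constants
`c, C > 0` (depending only on `m, n, r/s`) with the following property. Let `π₀, π ⊂ ℝ^{m+n}` be
`m`-dimensional subspaces with `‖p_π − p_{π₀}‖ ≤ c` (operator norm of the orthogonal
projections), and let `f : B_r(π₀) → π₀^⊥` be Lipschitz with constant `K ≤ c` and `sup|f| ≤ M`
with `M ≤ c r`. Then there is a Lipschitz `g : B_s(π) → π^⊥` whose graph coincides with the part
of the graph of `f` lying over `B_s(π)`, with `sup|g| ≤ C r ‖p_π − p_{π₀}‖ + C M` and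
`Lip(g) ≤ C ‖p_π − p_{π₀}‖ + C K`. -/
theorem graphical_reparametrization (m n : ℕ) (hm : 0 < m) (hn : 0 < n)
    (s r : ℝ) (hs : 0 < s) (hsr : s < r) :
    ∃ c C : ℝ, 0 < c ∧ 0 < C ∧
      ∀ π₀ π : Submodule ℝ (EuclideanSpace ℝ (Fin (m + n))),
        finrank ℝ π₀ = m → finrank ℝ π = m →
        ‖projL π - projL π₀‖ ≤ c →
        ∀ (f : π₀ → π₀ᗮ) (K M : ℝ), 0 ≤ K → K ≤ c → 0 ≤ M → M ≤ c * r →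
          (∀ x y : π₀, ‖x‖ ≤ r → ‖y‖ ≤ r → ‖f x - f y‖ ≤ K * ‖x - y‖) →
          (∀ x : π₀, ‖x‖ ≤ r → ‖f x‖ ≤ M) →
          ∃ g : π → πᗮ,
            ({z : EuclideanSpace ℝ (Fin (m + n)) |
                ∃ x : π₀, ‖x‖ ≤ r ∧ z = (x : EuclideanSpace ℝ (Fin (m + n))) + (f x : EuclideanSpace ℝ (Fin (m + n)))} ∩
              {z : EuclideanSpace ℝ (Fin (m + n)) | ‖projL π z‖ ≤ s}) =
              {z : EuclideanSpace ℝ (Fin (m + n)) |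
                ∃ y : π, ‖y‖ ≤ s ∧ z = (y : EuclideanSpace ℝ (Fin (m + n))) + (g y : EuclideanSpace ℝ (Fin (m + n)))} ∧
            (∀ y : π, ‖y‖ ≤ s → ‖g y‖ ≤ C * r * ‖projL π - projL π₀‖ + C * M) ∧
            (∀ y y' : π, ‖y‖ ≤ s → ‖y'‖ ≤ s →
              ‖g y - g y'‖ ≤ (C * ‖projL π - projL π₀‖ + C * K) * ‖y - y'‖) :=
  graphical_reparametrization_general m n s r hs hsr
end

section
/- For all positive integers m, n and all 0 < s < r there exists a constant c₀ > 0, depending only on m, n and r/s, with the following property. Let φ : B_s → ℝⁿ be a C² map with ‖φ‖_{C²} ≤ c₀ and ‖φ‖_{C⁰} ≤ c₀ r, where B_s ⊂ ℝᵐ is the closed ball of radius s centered at 0, and let f : B_r → ℝⁿ be Lipschitz with Lip(f) ≤ c₀ and ‖f‖_{C⁰} ≤ c₀ r. For p ∈ B_s set Φ(p) := (p, φ(p)) ∈ ℝ^{m+n}, let T_p := {(v, Dφ(p)·v) : v ∈ ℝᵐ} be the tangent space to the graph of φ at Φ(p), and let κ_p := T_p^⊥ be its orthogonal complement in ℝ^{m+n}.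 Then for every p ∈ B_s the affine subspace Φ(p) + κ_p intersects Gr(f) := {(x, f(x)) : x ∈ B_r} in exactly one point. -/
/-! A graph point `(x, f x)` lies on the normal fiber through `(p, φ p)` iff
`(x - p, f x - φ p)` is orthogonal to every `(v, L v)`, `L = Dφ(p)`, i.e. iff
`x = G x := p - L† (f x - φ p)`. As `‖L†‖ = ‖L‖ ≤ c₀` and `Lip f ≤ c₀`, the map `G` is a
`c₀²`-contraction of `B_r`, and the sup bounds on `f` and `φ` make it map `B_r` into itself as
soon as `s + 2 c₀² r ≤ r`; this is why `c₀ = √((r - s) / (2r))`. Banach's fixed-point theorem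
then gives exactly one such `x`. -/

noncomputable section

/-- The point `(x, y)` of `ℝᵐ × ℝⁿ`, equipped with the Euclidean (`ℓ²`) product structure. -/
def prodPt {m n : ℕ} (x : EuclideanSpace ℝ (Fin m)) (y : EuclideanSpace ℝ (Fin n)) :
    WithLp 2 (EuclideanSpace ℝ (Fin m) × EuclideanSpace ℝ (Fin n)) :=
  (WithLp.equiv 2 _).symm (x, y)

/-- The graph `{(v, L v) : v ∈ ℝᵐ}` of a linear map `L : ℝᵐ → ℝⁿ` as a subspace of
the Euclidean product `ℝᵐ × ℝⁿ`. -/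
def graphSubspace {m n : ℕ} (L : EuclideanSpace ℝ (Fin m) →L[ℝ] EuclideanSpace ℝ (Fin n)) :
    Submodule ℝ (WithLp 2 (EuclideanSpace ℝ (Fin m) × EuclideanSpace ℝ (Fin n))) :=
  Submodule.map
    (WithLp.linearEquiv 2 ℝ (EuclideanSpace ℝ (Fin m) × EuclideanSpace ℝ (Fin n))).symm.toLinearMap
    (LinearMap.graph L.toLinearMap)

open Set Metric Function

lemma existsUnique_isFixedPt_of_mapsTo {α : Type*} [MetricSpace α] {s : Set α}
    (hsc : IsComplete s) (hne : s.Nonempty) {K : NNReal} (hK : K < 1) {f : α → α}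
    (hsf : MapsTo f s s) (hf : LipschitzOnWith K f s) : ∃! x, x ∈ s ∧ IsFixedPt f x := by
  have hc : ContractingWith K (hsf.restrict f s s) := ⟨hK, hf.mapsToRestrict hsf⟩
  obtain ⟨x, hx⟩ := hne
  obtain ⟨y, hys, hy, -⟩ := ContractingWith.exists_fixedPoint' hsc hsf hc hx (edist_ne_top _ _)
  refine ⟨y, ⟨hys, hy⟩, fun z ⟨hzs, hz⟩ ↦ ?_⟩
  exact congrArg Subtype.val <|
    hc.fixedPoint_unique' (x := ⟨z, hzs⟩) (y := ⟨y, hys⟩) (Subtype.ext hz) (Subtype.ext hy)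

lemma existsUnique_isFixedPt_sub_apply_sub {E F : Type*} [NormedAddCommGroup E] [NormedSpace ℝ E]
    [CompleteSpace E] [NormedAddCommGroup F] [NormedSpace ℝ F]
    {A : F →L[ℝ] E} {f : E → F} {p : E} {q : F} {c r : ℝ} (hr : 0 ≤ r) (hA : ‖A‖ ≤ c)
    (hf : ∀ x y, ‖x‖ ≤ r → ‖y‖ ≤ r → ‖f x - f y‖ ≤ c * ‖x - y‖)
    (hf₀ : ∀ x, ‖x‖ ≤ r → ‖f x‖ ≤ c * r) (hc : c ^ 2 < 1) (hp : ‖p‖ + c * (c * r + ‖q‖) ≤ r) :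
    ∃! x, ‖x‖ ≤ r ∧ IsFixedPt (fun x ↦ p - A (f x - q)) x := by
  set G : E → E := fun x ↦ p - A (f x - q)
  have hc₀ : 0 ≤ c := (norm_nonneg A).trans hA
  have hmaps : MapsTo G (closedBall 0 r) (closedBall 0 r) := by
    intro x hx
    rw [mem_closedBall_zero_iff] at hx ⊢
    calc ‖G x‖ ≤ ‖p‖ + ‖A‖ * (‖f x‖ + ‖q‖) :=
          (norm_sub_le _ _).trans (by grw [A.le_opNorm, norm_sub_le])
      _ ≤ ‖p‖ + c * (c * r + ‖q‖) := by grw [hA, hf₀ x hx]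
      _ ≤ r := hp
  have hlip : LipschitzOnWith (c ^ 2).toNNReal G (closedBall 0 r) := by
    refine .of_dist_le' fun x hx y hy ↦ ?_
    rw [mem_closedBall_zero_iff] at hx hy
    calc dist (G x) (G y) = ‖A (f y - f x)‖ := by
          simp only [G, dist_eq_norm, map_sub]; congr 1; abel
      _ ≤ c * (c * ‖y - x‖) := by grw [A.le_opNorm, hA, hf y x hy hx]
      _ = c ^ 2 * dist x y := by rw [dist_comm, dist_eq_norm]; ring
  simpa only [mem_closedBall_zero_iff] using existsUnique_isFixedPt_of_mapsTo
    isClosed_closedBall.isComplete (nonempty_closedBall.2 hr) (Real.toNNReal_lt_one.2 hc) hmaps hlip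

lemma prodPt_mem_orthogonal_graphSubspace_iff {m n : ℕ}
    (L : EuclideanSpace ℝ (Fin m) →L[ℝ] EuclideanSpace ℝ (Fin n))
    (a : EuclideanSpace ℝ (Fin m)) (b : EuclideanSpace ℝ (Fin n)) :
    prodPt a b ∈ (graphSubspace L)ᗮ ↔ a + L.adjoint b = 0 := by
  have inner_graph (v : EuclideanSpace ℝ (Fin m)) :
      inner ℝ ((WithLp.linearEquiv 2 ℝ _).symm (v, L v)) (prodPt a b) =
        inner ℝ v (a + L.adjoint b) := by
    rw [WithLp.prod_inner_apply, inner_add_right, ContinuousLinearMap.adjoint_inner_right]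
    rfl
  have graph_mem (v : EuclideanSpace ℝ (Fin m)) :
      (WithLp.linearEquiv 2 ℝ _).symm (v, L v) ∈ graphSubspace L :=
    Submodule.mem_map_of_mem ((LinearMap.mem_graph_iff _ _).2 rfl)
  rw [Submodule.mem_orthogonal]
  refine ⟨fun h ↦ inner_self_eq_zero (𝕜 := ℝ) |>.mp ?_, fun h u hu ↦ ?_⟩
  · rw [← inner_graph]
    exact h _ (graph_mem _)
  · obtain ⟨⟨v, w⟩, hw, rfl⟩ := Submodule.mem_map.mp hu
    obtain rfl : w = L v := hw
    rw [LinearEquiv.coe_coe, inner_graph, h, inner_zero_right]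

lemma prodPt_sub_prodPt_mem_orthogonal_graphSubspace_iff {m n : ℕ}
    (L : EuclideanSpace ℝ (Fin m) →L[ℝ] EuclideanSpace ℝ (Fin n))
    (x p : EuclideanSpace ℝ (Fin m)) (y q : EuclideanSpace ℝ (Fin n)) :
    prodPt x y - prodPt p q ∈ (graphSubspace L)ᗮ ↔ p - L.adjoint (y - q) = x := by
  rw [show prodPt x y - prodPt p q = prodPt (x - p) (y - q) from rfl,
    prodPt_mem_orthogonal_graphSubspace_iff, ← neg_eq_zero,
    show -(x - p + L.adjoint (y - q)) = p - L.adjoint (y - q) - x by abel, sub_eq_zero]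

theorem normal_fiber_meets_graph_once_general (m n : ℕ)
    (s r : ℝ) (hs : 0 < s) (hsr : s < r) :
    ∃ c₀ : ℝ, 0 < c₀ ∧
      ∀ φ : EuclideanSpace ℝ (Fin m) → EuclideanSpace ℝ (Fin n), ContDiff ℝ 2 φ →
        (∀ x, ‖x‖ ≤ s → ‖φ x‖ + ‖fderiv ℝ φ x‖ + ‖fderiv ℝ (fderiv ℝ φ) x‖ ≤ c₀) →
        (∀ x, ‖x‖ ≤ s → ‖φ x‖ ≤ c₀ * r) →
        ∀ f : EuclideanSpace ℝ (Fin m) → EuclideanSpace ℝ (Fin n),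
          (∀ x y, ‖x‖ ≤ r → ‖y‖ ≤ r → ‖f x - f y‖ ≤ c₀ * ‖x - y‖) →
          (∀ x, ‖x‖ ≤ r → ‖f x‖ ≤ c₀ * r) →
          ∀ p : EuclideanSpace ℝ (Fin m), ‖p‖ ≤ s →
            ∃! z : WithLp 2 (EuclideanSpace ℝ (Fin m) × EuclideanSpace ℝ (Fin n)),
              (∃ x, ‖x‖ ≤ r ∧ z = prodPt x (f x)) ∧
              z - prodPt p (φ p) ∈ (graphSubspace (fderiv ℝ φ p))ᗮ := by
  have hr : 0 < r := hs.trans hsr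
  have hq : 0 < (r - s) / (2 * r) := div_pos (by linarith) (by linarith)
  refine ⟨√((r - s) / (2 * r)), Real.sqrt_pos.2 hq, ?_⟩
  set c := √((r - s) / (2 * r))
  have hc : c ^ 2 = (r - s) / (2 * r) := Real.sq_sqrt hq.le
  intro φ _ hφ₂ hφ₀ f hf hf₀ p hp
  have hL : ‖(fderiv ℝ φ p).adjoint‖ ≤ c := by
    rw [LinearIsometryEquiv.norm_map]
    linarith [hφ₂ p hp, norm_nonneg (φ p), norm_nonneg (fderiv ℝ (fderiv ℝ φ) p)]
  have hball : ‖p‖ + c * (c * r + ‖φ p‖) ≤ r :=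
    calc ‖p‖ + c * (c * r + ‖φ p‖) ≤ s + c * (c * r + c * r) := by grw [hp, hφ₀ p hp]
      _ = s + 2 * c ^ 2 * r := by ring
      _ = r := by rw [hc]; field_simp; ring
  obtain ⟨x, ⟨hx, hGx⟩, huniq⟩ := existsUnique_isFixedPt_sub_apply_sub hr.le hL hf hf₀
    (by rw [hc, div_lt_one (by positivity)]; linarith) hball
  refine ⟨prodPt x (f x), ⟨⟨x, hx, rfl⟩, ?_⟩, ?_⟩
  · exact (prodPt_sub_prodPt_mem_orthogonal_graphSubspace_iff ..).2 hGx
  · rintro _ ⟨⟨y, hy, rfl⟩, hyn⟩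
    rw [huniq y ⟨hy, (prodPt_sub_prodPt_mem_orthogonal_graphSubspace_iff ..).1 hyn⟩]

/-- For all positive integers `m, n` and all `0 < s < r` there exists `c₀ > 0`,
depending only on `m, n, r/s`, with the following property. Let `φ : B_s → ℝⁿ` be `C²` with
`‖φ‖_{C²} ≤ c₀` and `‖φ‖_{C⁰} ≤ c₀ r`, and let `f : B_r → ℝⁿ` be Lipschitz with `Lip(f) ≤ c₀`
and `‖f‖_{C⁰} ≤ c₀ r`. For `p ∈ B_s` let `Φ(p) = (p, φ(p))`, `T_p = {(v, Dφ(p)·v)}` the tangent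
space to the graph of `φ` at `Φ(p)`, and `κ_p = T_p^⊥`. Then for every `p ∈ B_s` the affine
subspace `Φ(p) + κ_p` meets `Gr(f) = {(x, f(x)) : x ∈ B_r}` in exactly one point. -/
theorem normal_fiber_meets_graph_once (m n : ℕ) (hm : 0 < m) (hn : 0 < n)
    (s r : ℝ) (hs : 0 < s) (hsr : s < r) :
    ∃ c₀ : ℝ, 0 < c₀ ∧
      ∀ φ : EuclideanSpace ℝ (Fin m) → EuclideanSpace ℝ (Fin n), ContDiff ℝ 2 φ →
        (∀ x, ‖x‖ ≤ s → ‖φ x‖ + ‖fderiv ℝ φ x‖ + ‖fderiv ℝ (fderiv ℝ φ) x‖ ≤ c₀) →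
        (∀ x, ‖x‖ ≤ s → ‖φ x‖ ≤ c₀ * r) →
        ∀ f : EuclideanSpace ℝ (Fin m) → EuclideanSpace ℝ (Fin n),
          (∀ x y, ‖x‖ ≤ r → ‖y‖ ≤ r → ‖f x - f y‖ ≤ c₀ * ‖x - y‖) →
          (∀ x, ‖x‖ ≤ r → ‖f x‖ ≤ c₀ * r) →
          ∀ p : EuclideanSpace ℝ (Fin m), ‖p‖ ≤ s →
            ∃! z : WithLp 2 (EuclideanSpace ℝ (Fin m) × EuclideanSpace ℝ (Fin n)),
              (∃ x, ‖x‖ ≤ r ∧ z = prodPt x (f x)) ∧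
              z - prodPt p (φ p) ∈ (graphSubspace (fderiv ℝ φ p))ᗮ :=
  normal_fiber_meets_graph_once_general m n s r hs hsr

end
end

section
/- For all positive integers m, n and all 0 < s < r there exist constants c₀, C > 0, depending only on m, n and r/s, with the following property. Let φ : B_s → ℝⁿ be a C² map with ‖φ‖_{C²} ≤ c₀ and ‖φ‖_{C⁰} ≤ c₀ r, where B_s ⊂ ℝᵐ is the closed ball of radius s centered at 0, and let f : B_r → ℝⁿ be Lipschitz with Lip(f) ≤ c₀ and ‖f‖_{C⁰} ≤ c₀ r. For p ∈ B_s set Φ(p) := (p, φ(p)), let κ_p be the orthogonal complement in ℝ^{m+n} of T_p := {(v, Dφ(p)·v) : v ∈ ℝᵐ}, and define N(p) := q(p) − Φ(p), where q(p) is the unique intersection point of Φ(p) + κ_p with Gr(f) := {(x, f(x)) : x ∈ B_r}. Then N : B_s → ℝ^{m+n} satisfies Lip(N) ≤ C ( ‖D²φ‖_{C⁰} ‖N‖_{C⁰} + ‖Dφ‖_{C⁰} + Lip(f) ) and (1/2)|N(p)| ≤ |f(p) − φ(p)| ≤ 2 |N(p)| for every p ∈ B_s. -/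
noncomputable section

/-!
Testing the orthogonality of `N p` to the graph of `Dφ p` against the horizontal part of `N p`
gives `‖(N p).fst‖ ≤ ‖Dφ p‖ ‖(N p).snd‖`: the normal displacement is almost vertical, and since
`f` has a small Lipschitz constant its vertical part is comparable to `f p - φ p`. The same test
applied to `N p - N q` only picks up the tilt error `‖Dφ p - Dφ q‖ ‖N q‖ ≤ ‖D²φ‖ ‖N‖ ‖p - q‖`,
while the vertical part of `N p - N q` is controlled by the Lipschitz bounds of `f` and `φ`.
In both cases one component is eliminated against the other, which works once `‖Dφ‖` and
`Lip f` are at most `1 / 8`.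
-/

open scoped RealInnerProductSpace

section Inner

variable {E F : Type*} [NormedAddCommGroup E] [NormedSpace ℝ E] [NormedAddCommGroup F]
  [InnerProductSpace ℝ F]

theorem neg_real_inner_apply_le_opNorm_mul_mul (L : E →L[ℝ] F) (u : E) (w : F) :
    -⟪w, L u⟫ ≤ ‖L‖ * ‖w‖ * ‖u‖ :=
  calc -⟪w, L u⟫ ≤ ‖w‖ * ‖L u‖ := (neg_le_abs _).trans (abs_real_inner_le_norm _ _)
    _ ≤ ‖w‖ * (‖L‖ * ‖u‖) := by gcongr; exact L.le_opNorm u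
    _ = ‖L‖ * ‖w‖ * ‖u‖ := by ring

theorem norm_le_opNorm_mul_add_of_sq_add_inner_le {L : E →L[ℝ] F} {u : E} {w : F} {e : ℝ}
    (he : 0 ≤ e) (h : ‖u‖ ^ 2 + ⟪w, L u⟫ ≤ e * ‖u‖) : ‖u‖ ≤ ‖L‖ * ‖w‖ + e := by
  have hLu := neg_real_inner_apply_le_opNorm_mul_mul L u w
  rcases (norm_nonneg u).eq_or_lt with hu | hu
  · rw [← hu]; positivity
  · nlinarith

end Inner

section ProductNorm

variable {E F : Type*} [NormedAddCommGroup E] [NormedAddCommGroup F]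

theorem WithLp.prod_norm_le_norm_fst_add_norm_snd (z : WithLp 2 (E × F)) :
    ‖z‖ ≤ ‖z.fst‖ + ‖z.snd‖ := by
  nlinarith [WithLp.prod_norm_sq_eq_of_L2 z, norm_nonneg z, norm_nonneg z.fst, norm_nonneg z.snd]

/-- Eliminating `‖z.snd‖` leaves `‖z.fst‖ ≤ ‖z.fst‖ / 64 + X + Y / 8`. -/
theorem WithLp.prod_norm_le_two_mul_of_fst_le_of_snd_le {z : WithLp 2 (E × F)} {k X Y : ℝ}
    (hk : k ≤ 1 / 8) (hfst : ‖z.fst‖ ≤ ‖z.snd‖ / 8 + X) (hsnd : ‖z.snd‖ ≤ k * ‖z.fst‖ + Y) :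
    ‖z‖ ≤ 2 * (X + Y) := by
  have hk' : k * ‖z.fst‖ ≤ ‖z.fst‖ / 8 := by nlinarith [norm_nonneg z.fst]
  linarith [z.prod_norm_le_norm_fst_add_norm_snd, norm_nonneg z.fst, norm_nonneg z.snd]

end ProductNorm

theorem norm_image_sub_le_of_norm_fderiv_le_of_norm_le {E F : Type*} [NormedAddCommGroup E]
    [NormedSpace ℝ E] [NormedAddCommGroup F] [NormedSpace ℝ F] {g : E → F}
    (hg : Differentiable ℝ g) {s K : ℝ} (hK : ∀ x, ‖x‖ ≤ s → ‖fderiv ℝ g x‖ ≤ K) {p q : E}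
    (hp : ‖p‖ ≤ s) (hq : ‖q‖ ≤ s) : ‖g p - g q‖ ≤ K * ‖p - q‖ :=
  (convex_closedBall 0 s).norm_image_sub_le_of_norm_fderiv_le (fun x _ => hg x)
    (fun x hx => hK x (mem_closedBall_zero_iff.mp hx)) (mem_closedBall_zero_iff.mpr hq)
    (mem_closedBall_zero_iff.mpr hp)

variable {m n : ℕ}

theorem inner_fst_add_inner_snd_eq_zero_of_mem_orthogonal_graphSubspace
    {L : EuclideanSpace ℝ (Fin m) →L[ℝ] EuclideanSpace ℝ (Fin n)}
    {z : WithLp 2 (EuclideanSpace ℝ (Fin m) × EuclideanSpace ℝ (Fin n))}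
    (hz : z ∈ (graphSubspace L)ᗮ) (v : EuclideanSpace ℝ (Fin m)) :
    ⟪z.fst, v⟫ + ⟪z.snd, L v⟫ = 0 := by
  have hv : prodPt v (L v) ∈ graphSubspace L :=
    Submodule.mem_map.mpr ⟨(v, L v), (LinearMap.mem_graph_iff _ _).mpr rfl, rfl⟩
  rw [← Submodule.inner_left_of_mem_orthogonal hv hz, WithLp.prod_inner_apply]
  rfl

theorem norm_fst_sub_le_of_mem_orthogonal_graphSubspace
    {L₁ L₂ : EuclideanSpace ℝ (Fin m) →L[ℝ] EuclideanSpace ℝ (Fin n)}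
    {z₁ z₂ : WithLp 2 (EuclideanSpace ℝ (Fin m) × EuclideanSpace ℝ (Fin n))}
    (hz₁ : z₁ ∈ (graphSubspace L₁)ᗮ) (hz₂ : z₂ ∈ (graphSubspace L₂)ᗮ) :
    ‖(z₁ - z₂).fst‖ ≤ ‖L₁‖ * ‖(z₁ - z₂).snd‖ + ‖L₁ - L₂‖ * ‖z₂.snd‖ := by
  set u := (z₁ - z₂).fst with hu
  have h₁ := inner_fst_add_inner_snd_eq_zero_of_mem_orthogonal_graphSubspace hz₁ u
  have h₂ := inner_fst_add_inner_snd_eq_zero_of_mem_orthogonal_graphSubspace hz₂ u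
  have hsq : ‖u‖ ^ 2 + ⟪(z₁ - z₂).snd, L₁ u⟫ = -⟪z₂.snd, (L₁ - L₂) u⟫ := by
    rw [← real_inner_self_eq_norm_sq]
    nth_rw 1 [hu]
    simp only [WithLp.sub_fst, WithLp.sub_snd, inner_sub_left, inner_sub_right,
      sub_apply]
    linarith
  refine norm_le_opNorm_mul_add_of_sq_add_inner_le (by positivity) ?_
  linarith [neg_real_inner_apply_le_opNorm_mul_mul (L₁ - L₂) u z₂.snd]

theorem norm_fst_le_of_mem_orthogonal_graphSubspace
    {L : EuclideanSpace ℝ (Fin m) →L[ℝ] EuclideanSpace ℝ (Fin n)}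
    {z : WithLp 2 (EuclideanSpace ℝ (Fin m) × EuclideanSpace ℝ (Fin n))}
    (hz : z ∈ (graphSubspace L)ᗮ) : ‖z.fst‖ ≤ ‖L‖ * ‖z.snd‖ := by
  simpa using norm_fst_sub_le_of_mem_orthogonal_graphSubspace hz (zero_mem (graphSubspace L)ᗮ)

theorem fst_eq_sub_and_snd_eq_sub_of_prodPt_add_eq {p x : EuclideanSpace ℝ (Fin m)}
    {y w : EuclideanSpace ℝ (Fin n)}
    {z : WithLp 2 (EuclideanSpace ℝ (Fin m) × EuclideanSpace ℝ (Fin n))}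
    (h : prodPt p y + z = prodPt x w) : z.fst = x - p ∧ z.snd = w - y :=
  ⟨eq_sub_of_add_eq' (congrArg WithLp.fst h), eq_sub_of_add_eq' (congrArg WithLp.snd h)⟩

theorem half_norm_le_norm_sub_and_norm_sub_le_two_mul_norm
    {f : EuclideanSpace ℝ (Fin m) → EuclideanSpace ℝ (Fin n)}
    {L : EuclideanSpace ℝ (Fin m) →L[ℝ] EuclideanSpace ℝ (Fin n)}
    {p x : EuclideanSpace ℝ (Fin m)} {y : EuclideanSpace ℝ (Fin n)}
    {z : WithLp 2 (EuclideanSpace ℝ (Fin m) × EuclideanSpace ℝ (Fin n))} {k : ℝ}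
    (hL : ‖L‖ ≤ 1 / 8) (hk : k ≤ 1 / 8) (hz : z ∈ (graphSubspace L)ᗮ)
    (hpz : prodPt p y + z = prodPt x (f x)) (hf : ‖f x - f p‖ ≤ k * ‖x - p‖) :
    1 / 2 * ‖z‖ ≤ ‖f p - y‖ ∧ ‖f p - y‖ ≤ 2 * ‖z‖ := by
  obtain ⟨hfst, hsnd⟩ := fst_eq_sub_and_snd_eq_sub_of_prodPt_add_eq hpz
  have hslope : ‖z.fst‖ ≤ ‖z.snd‖ / 8 + 0 := by
    nlinarith [norm_fst_le_of_mem_orthogonal_graphSubspace hz, norm_nonneg z.snd]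
  have hvert : ‖z.snd‖ ≤ k * ‖z.fst‖ + ‖f p - y‖ := by
    rw [hfst, hsnd]
    linarith [norm_sub_le_norm_sub_add_norm_sub (f x) (f p) y]
  have hvert' : ‖f p - y‖ ≤ k * ‖z.fst‖ + ‖z.snd‖ := by
    rw [hfst, hsnd]
    linarith [norm_sub_le_norm_sub_add_norm_sub (f p) (f x) y, norm_sub_rev (f p) (f x)]
  constructor
  · linarith [WithLp.prod_norm_le_two_mul_of_fst_le_of_snd_le hk hslope hvert]
  · nlinarith [norm_nonneg z.fst, norm_nonneg z.snd, z.norm_snd_le]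

theorem norm_sub_le_of_prodPt_add_eq_of_mem_orthogonal_graphSubspace
    {f : EuclideanSpace ℝ (Fin m) → EuclideanSpace ℝ (Fin n)}
    {L₁ L₂ : EuclideanSpace ℝ (Fin m) →L[ℝ] EuclideanSpace ℝ (Fin n)}
    {p q x₁ x₂ : EuclideanSpace ℝ (Fin m)} {y₁ y₂ : EuclideanSpace ℝ (Fin n)}
    {z₁ z₂ : WithLp 2 (EuclideanSpace ℝ (Fin m) × EuclideanSpace ℝ (Fin n))} {k K₁ K₂ K_N : ℝ}
    (hL₁ : ‖L₁‖ ≤ 1 / 8) (hk₀ : 0 ≤ k) (hk : k ≤ 1 / 8)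
    (hz₁ : z₁ ∈ (graphSubspace L₁)ᗮ) (hz₂ : z₂ ∈ (graphSubspace L₂)ᗮ)
    (h₁ : prodPt p y₁ + z₁ = prodPt x₁ (f x₁)) (h₂ : prodPt q y₂ + z₂ = prodPt x₂ (f x₂))
    (hf : ‖f x₁ - f x₂‖ ≤ k * ‖x₁ - x₂‖) (hy : ‖y₁ - y₂‖ ≤ K₁ * ‖p - q‖)
    (hL : ‖L₁ - L₂‖ ≤ K₂ * ‖p - q‖) (hz₂N : ‖z₂‖ ≤ K_N) :
    ‖z₁ - z₂‖ ≤ 2 * (K₂ * K_N + K₁ + k) * ‖p - q‖ := by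
  obtain ⟨hfst₁, hsnd₁⟩ := fst_eq_sub_and_snd_eq_sub_of_prodPt_add_eq h₁
  obtain ⟨hfst₂, hsnd₂⟩ := fst_eq_sub_and_snd_eq_sub_of_prodPt_add_eq h₂
  have hWfst : (z₁ - z₂).fst = (x₁ - x₂) - (p - q) := by
    rw [WithLp.sub_fst, hfst₁, hfst₂]; abel
  have hWsnd : (z₁ - z₂).snd = (f x₁ - f x₂) - (y₁ - y₂) := by
    rw [WithLp.sub_snd, hsnd₁, hsnd₂]; abel
  have hslope : ‖(z₁ - z₂).fst‖ ≤ ‖(z₁ - z₂).snd‖ / 8 + K₂ * K_N * ‖p - q‖ := by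
    have htilt : ‖L₁ - L₂‖ * ‖z₂.snd‖ ≤ K₂ * ‖p - q‖ * K_N :=
      mul_le_mul hL ((z₂.norm_snd_le).trans hz₂N) (norm_nonneg _)
        ((norm_nonneg _).trans hL)
    nlinarith [norm_fst_sub_le_of_mem_orthogonal_graphSubspace hz₁ hz₂,
      norm_nonneg (z₁ - z₂).snd]
  have hx : ‖x₁ - x₂‖ ≤ ‖(z₁ - z₂).fst‖ + ‖p - q‖ :=
    calc ‖x₁ - x₂‖ = ‖(z₁ - z₂).fst + (p - q)‖ := by rw [hWfst, sub_add_cancel]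
      _ ≤ ‖(z₁ - z₂).fst‖ + ‖p - q‖ := norm_add_le _ _
  have hvert : ‖(z₁ - z₂).snd‖ ≤ k * ‖(z₁ - z₂).fst‖ + (k + K₁) * ‖p - q‖ :=
    calc ‖(z₁ - z₂).snd‖ ≤ ‖f x₁ - f x₂‖ + ‖y₁ - y₂‖ := by rw [hWsnd]; exact norm_sub_le _ _
      _ ≤ k * (‖(z₁ - z₂).fst‖ + ‖p - q‖) + K₁ * ‖p - q‖ := by
        gcongr
        exact hf.trans (mul_le_mul_of_nonneg_left hx hk₀)
      _ = k * ‖(z₁ - z₂).fst‖ + (k + K₁) * ‖p - q‖ := by ring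
  calc ‖z₁ - z₂‖ ≤ 2 * (K₂ * K_N * ‖p - q‖ + (k + K₁) * ‖p - q‖) :=
        WithLp.prod_norm_le_two_mul_of_fst_le_of_snd_le hk hslope hvert
    _ = 2 * (K₂ * K_N + K₁ + k) * ‖p - q‖ := by ring

theorem normal_graph_parametrization_estimates_general (m n : ℕ)
    (s r : ℝ) (hsr : s < r) :
    ∃ c₀ C : ℝ, 0 < c₀ ∧ 0 < C ∧
      ∀ φ : EuclideanSpace ℝ (Fin m) → EuclideanSpace ℝ (Fin n), ContDiff ℝ 2 φ →
        (∀ x, ‖x‖ ≤ s → ‖φ x‖ + ‖fderiv ℝ φ x‖ + ‖fderiv ℝ (fderiv ℝ φ) x‖ ≤ c₀) →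
        (∀ x, ‖x‖ ≤ s → ‖φ x‖ ≤ c₀ * r) →
        ∀ f : EuclideanSpace ℝ (Fin m) → EuclideanSpace ℝ (Fin n),
        ∀ K₁ K₂ K_f K_N : ℝ,
          (∀ x, ‖x‖ ≤ s → ‖fderiv ℝ φ x‖ ≤ K₁) →
          (∀ x, ‖x‖ ≤ s → ‖fderiv ℝ (fderiv ℝ φ) x‖ ≤ K₂) →
          K_f ≤ c₀ →
          (∀ x y, ‖x‖ ≤ r → ‖y‖ ≤ r → ‖f x - f y‖ ≤ K_f * ‖x - y‖) →
          (∀ x, ‖x‖ ≤ r → ‖f x‖ ≤ c₀ * r) →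
          ∀ N : EuclideanSpace ℝ (Fin m) →
              WithLp 2 (EuclideanSpace ℝ (Fin m) × EuclideanSpace ℝ (Fin n)),
            (∀ p, ‖p‖ ≤ s →
              (∃ x, ‖x‖ ≤ r ∧ prodPt p (φ p) + N p = prodPt x (f x)) ∧
              N p ∈ (graphSubspace (fderiv ℝ φ p))ᗮ) →
            (∀ p, ‖p‖ ≤ s → ‖N p‖ ≤ K_N) →
            (∀ p q, ‖p‖ ≤ s → ‖q‖ ≤ s →
              ‖N p - N q‖ ≤ C * (K₂ * K_N + K₁ + K_f) * ‖p - q‖) ∧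
            (∀ p, ‖p‖ ≤ s →
              (1 / 2) * ‖N p‖ ≤ ‖f p - φ p‖ ∧ ‖f p - φ p‖ ≤ 2 * ‖N p‖) := by
  refine ⟨1 / 8, 2, by norm_num, by norm_num, ?_⟩
  intro φ hφ hC2 _ f K₁ K₂ K_f K_N hK₁ hK₂ hK_f hf _ N hN hK_N
  have hφ₁ : Differentiable ℝ φ := hφ.differentiable (by norm_num)
  have hφ₂ : Differentiable ℝ (fderiv ℝ φ) :=
    (hφ.fderiv_right (m := 1) (by norm_num)).differentiable (by norm_num)
  have hDφ : ∀ x, ‖x‖ ≤ s → ‖fderiv ℝ φ x‖ ≤ 1 / 8 := fun x hx => by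
    linarith [hC2 x hx, norm_nonneg (φ x), norm_nonneg (fderiv ℝ (fderiv ℝ φ) x)]
  have hball : ∀ p : EuclideanSpace ℝ (Fin m), ‖p‖ ≤ s → ‖p‖ ≤ r := fun p hp => hp.trans hsr.le
  constructor
  · intro p q hp hq
    obtain ⟨⟨x₁, hx₁, h₁⟩, hz₁⟩ := hN p hp
    obtain ⟨⟨x₂, hx₂, h₂⟩, hz₂⟩ := hN q hq
    rcases le_or_gt 0 K_f with hK_f₀ | hK_f₀
    · exact norm_sub_le_of_prodPt_add_eq_of_mem_orthogonal_graphSubspace (hDφ p hp) hK_f₀ hK_f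
        hz₁ hz₂ h₁ h₂ (hf x₁ x₂ hx₁ hx₂) (norm_image_sub_le_of_norm_fderiv_le_of_norm_le hφ₁ hK₁ hp hq)
        (norm_image_sub_le_of_norm_fderiv_le_of_norm_le hφ₂ hK₂ hp hq) (hK_N q hq)
    · -- a negative Lipschitz bound for `f` on the ball forces `p = q`
      have hpq : p = q := norm_sub_eq_zero_iff.mp <| le_antisymm
        (by nlinarith [hf p q (hball p hp) (hball q hq), norm_nonneg (f p - f q)]) (norm_nonneg _)
      simp [hpq]
  · intro p hp
    obtain ⟨⟨x, hx, h⟩, hz⟩ := hN p hp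
    exact half_norm_le_norm_sub_and_norm_sub_le_two_mul_norm (hDφ p hp) hK_f hz h
      (hf x p hx (hball p hp))

/-- For all positive integers `m, n` and all `0 < s < r` there exist constants
`c₀, C > 0`, depending only on `m, n, r/s`, with the following property. Let `φ : B_s → ℝⁿ` be
`C²` with `‖φ‖_{C²} ≤ c₀`, `‖φ‖_{C⁰} ≤ c₀ r`, and `f : B_r → ℝⁿ` Lipschitz with `Lip(f) ≤ c₀`,
`‖f‖_{C⁰} ≤ c₀ r`. For `p ∈ B_s` let `N(p) := q(p) − Φ(p)`, where `Φ(p) = (p, φ(p))` and `q(p)`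
is the (unique) point of `Gr(f)` in `Φ(p) + κ_p`, `κ_p` the orthogonal complement of the tangent
space of the graph of `φ` at `Φ(p)`. Then
`Lip(N) ≤ C(‖D²φ‖_{C⁰} ‖N‖_{C⁰} + ‖Dφ‖_{C⁰} + Lip(f))` and
`(1/2)|N(p)| ≤ |f(p) − φ(p)| ≤ 2|N(p)|` for all `p ∈ B_s`. -/
theorem normal_graph_parametrization_estimates (m n : ℕ) (hm : 0 < m) (hn : 0 < n)
    (s r : ℝ) (hs : 0 < s) (hsr : s < r) :
    ∃ c₀ C : ℝ, 0 < c₀ ∧ 0 < C ∧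
      ∀ φ : EuclideanSpace ℝ (Fin m) → EuclideanSpace ℝ (Fin n), ContDiff ℝ 2 φ →
        (∀ x, ‖x‖ ≤ s → ‖φ x‖ + ‖fderiv ℝ φ x‖ + ‖fderiv ℝ (fderiv ℝ φ) x‖ ≤ c₀) →
        (∀ x, ‖x‖ ≤ s → ‖φ x‖ ≤ c₀ * r) →
        ∀ f : EuclideanSpace ℝ (Fin m) → EuclideanSpace ℝ (Fin n),
        ∀ K₁ K₂ K_f K_N : ℝ,
          (∀ x, ‖x‖ ≤ s → ‖fderiv ℝ φ x‖ ≤ K₁) →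
          (∀ x, ‖x‖ ≤ s → ‖fderiv ℝ (fderiv ℝ φ) x‖ ≤ K₂) →
          K_f ≤ c₀ →
          (∀ x y, ‖x‖ ≤ r → ‖y‖ ≤ r → ‖f x - f y‖ ≤ K_f * ‖x - y‖) →
          (∀ x, ‖x‖ ≤ r → ‖f x‖ ≤ c₀ * r) →
          ∀ N : EuclideanSpace ℝ (Fin m) →
              WithLp 2 (EuclideanSpace ℝ (Fin m) × EuclideanSpace ℝ (Fin n)),
            (∀ p, ‖p‖ ≤ s →
              (∃ x, ‖x‖ ≤ r ∧ prodPt p (φ p) + N p = prodPt x (f x)) ∧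
              N p ∈ (graphSubspace (fderiv ℝ φ p))ᗮ) →
            (∀ p, ‖p‖ ≤ s → ‖N p‖ ≤ K_N) →
            (∀ p q, ‖p‖ ≤ s → ‖q‖ ≤ s →
              ‖N p - N q‖ ≤ C * (K₂ * K_N + K₁ + K_f) * ‖p - q‖) ∧
            (∀ p, ‖p‖ ≤ s →
              (1 / 2) * ‖N p‖ ≤ ‖f p - φ p‖ ∧ ‖f p - φ p‖ ≤ 2 * ‖N p‖) :=
  normal_graph_parametrization_estimates_general m n s r hsr

end
end

section
/- For every positive integer m there exists a constant C > 0, depending only on m, such that for every real m×m matrix X with ‖X‖ ≤ 1/2 one has det(Iₘ + X) > 0 and | √(det(Iₘ + X)) − 1 − (1/2) tr X − (1/2) E₂(X) + (1/8)(tr X)² | ≤ C ‖X‖³, where E₂(X) denotes the sum of all 2×2 principal minors of X. -/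
open Matrix

/-- The Hilbert–Schmidt (Frobenius) norm of a matrix. -/
noncomputable def hsNorm {n m : ℕ} (X : Matrix (Fin n) (Fin m) ℝ) : ℝ :=
  Real.sqrt ((Xᵀ * X).trace)

/-- `E₂(X)`: the sum of all `2×2` principal minors of the square matrix `X`. -/
def E2 {m : ℕ} (X : Matrix (Fin m) (Fin m) ℝ) : ℝ :=
  ∑ i, ∑ j ∈ Finset.Ioi i, (X i i * X j j - X i j * X j i)

lemma hsNorm_sq {n m : ℕ} (X : Matrix (Fin n) (Fin m) ℝ) :
    hsNorm X ^ 2 = ∑ i, ∑ j, X i j ^ 2 := by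
  have h : (Xᵀ * X).trace = ∑ i, ∑ j, X j i ^ 2 := by
    simp [Matrix.trace, Matrix.diag, Matrix.mul_apply, sq]
  rw [hsNorm, Real.sq_sqrt]
  · rw [h, Finset.sum_comm]
  · rw [h]; positivity

lemma hsNorm_nonneg {n m : ℕ} (X : Matrix (Fin n) (Fin m) ℝ) : 0 ≤ hsNorm X :=
  Real.sqrt_nonneg _

lemma entry_le {n m : ℕ} (X : Matrix (Fin n) (Fin m) ℝ) (i : Fin n) (j : Fin m) :
    |X i j| ≤ hsNorm X := by
  rw [← Real.sqrt_sq (hsNorm_nonneg X), ← Real.sqrt_sq_eq_abs]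
  apply Real.sqrt_le_sqrt
  rw [hsNorm_sq]
  calc X i j ^ 2 ≤ ∑ j', X i j' ^ 2 := by
        apply Finset.single_le_sum (f := fun j' => X i j' ^ 2) (fun _ _ => sq_nonneg _) (Finset.mem_univ j)
    _ ≤ ∑ i', ∑ j', X i' j' ^ 2 := by
        apply Finset.single_le_sum (f := fun i' => ∑ j', X i' j' ^ 2) (fun _ _ => by positivity) (Finset.mem_univ i)

-- if hsNorm X < 1 then (1+X).mulVec v = 0 → v = 0, hence det ≠ 0
lemma det_one_add_ne_zero {m : ℕ} (X : Matrix (Fin m) (Fin m) ℝ) (h : hsNorm X < 1) :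
    (1 + X).det ≠ 0 := by
  rw [ne_eq, ← Matrix.exists_mulVec_eq_zero_iff]
  rintro ⟨v, hv, hmv⟩
  apply hv
  -- from (1+X) v = 0 : v = - X v
  have hveq : ∀ i, v i = -(X.mulVec v i) := by
    intro i
    have := congrFun hmv i
    simp [Matrix.add_mulVec, Matrix.one_mulVec] at this
    linarith
  have hCS : ∀ i, (X.mulVec v i) ^ 2 ≤ (∑ j, X i j ^ 2) * ∑ j, v j ^ 2 := by
    intro i
    exact Finset.sum_mul_sq_le_sq_mul_sq Finset.univ (fun j => X i j) v
  have hsum : ∑ i, v i ^ 2 ≤ (hsNorm X)^2 * ∑ j, v j ^ 2 := by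
    calc ∑ i, v i ^ 2 = ∑ i, (X.mulVec v i) ^ 2 := by
          apply Finset.sum_congr rfl; intro i _; rw [hveq i]; ring
      _ ≤ ∑ i, (∑ j, X i j ^ 2) * ∑ j, v j ^ 2 := Finset.sum_le_sum (fun i _ => hCS i)
      _ = (hsNorm X)^2 * ∑ j, v j ^ 2 := by rw [← Finset.sum_mul, hsNorm_sq]
  have hvs : 0 ≤ ∑ j, v j ^ 2 := by positivity
  have hN2 : (hsNorm X)^2 < 1 := by
    have := hsNorm_nonneg X
    nlinarith
  have : ∑ j, v j ^ 2 ≤ 0 := by nlinarith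
  have hz : ∑ j, v j ^ 2 = 0 := le_antisymm this hvs
  funext i
  have : v i ^ 2 = 0 := by
    have := Finset.sum_eq_zero_iff_of_nonneg (fun j _ => sq_nonneg (v j)) |>.mp hz i (Finset.mem_univ i)
    exact this
  have := sq_eq_zero_iff.mp this
  simpa using this

lemma det_one_add_pos {m : ℕ} (X : Matrix (Fin m) (Fin m) ℝ) (h : hsNorm X < 1) :
    0 < (1 + X).det := by
  by_contra hle
  push_neg at hle
  have hne := det_one_add_ne_zero X h
  have hlt : (1 + X).det < 0 := lt_of_le_of_ne hle hne
  -- continuity of t ↦ det (1 + t • X)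
  have hcont : ContinuousOn (fun t : ℝ => (1 + t • X).det) (Set.Icc 0 1) := by
    apply Continuous.continuousOn
    have hrw : (fun t : ℝ => (1 + t • X).det) = fun t : ℝ =>
        ∑ σ : Equiv.Perm (Fin m), ((Equiv.Perm.sign σ : ℤ) : ℝ) *
          ∏ i, ((1 : Matrix (Fin m) (Fin m) ℝ) (σ i) i + t * X (σ i) i) := by
      funext t
      rw [Matrix.det_apply']
      refine Finset.sum_congr rfl fun σ _ => ?_
      simp [Matrix.add_apply, Matrix.smul_apply, smul_eq_mul]
    rw [hrw]
    apply continuous_finset_sum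
    intro σ _
    apply Continuous.mul continuous_const
    apply continuous_finset_prod
    intro i _
    fun_prop
  have h0 : (fun t : ℝ => (1 + t • X).det) 0 = 1 := by simp
  have h1 : (fun t : ℝ => (1 + t • X).det) 1 = (1 + X).det := by simp
  have : (0:ℝ) ∈ Set.Icc ((fun t : ℝ => (1 + t • X).det) 1) ((fun t : ℝ => (1 + t • X).det) 0) := by
    rw [h0, h1]; constructor <;> linarith
  obtain ⟨t, ht, hdet0⟩ := intermediate_value_Icc' (by norm_num : (0:ℝ) ≤ 1) hcont this
  have htn : hsNorm (t • X) < 1 := by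
    have h1 : hsNorm (t • X) ^ 2 = t^2 * hsNorm X ^ 2 := by
      rw [hsNorm_sq, hsNorm_sq]
      simp [Matrix.smul_apply, mul_pow, Finset.mul_sum]
    have h2 : hsNorm (t • X) ^ 2 < 1 := by
      have ht0 := ht.1; have ht1 := ht.2
      have hN := hsNorm_nonneg X
      have h3 : t^2 ≤ 1 := by nlinarith
      have h4 : hsNorm X ^ 2 < 1 := by nlinarith
      nlinarith [sq_nonneg (hsNorm X)]
    nlinarith [hsNorm_nonneg (t • X)]
  exact det_one_add_ne_zero (t • X) htn hdet0


lemma sqrt_taylor_small (τ s p : ℝ) (hs0 : 0 ≤ s) (hs2 : s^2 = 1+τ)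
    (hp : p = 1 + τ/2 - τ^2/8) (hcase : |τ| ≤ 1/2) : |s - p| ≤ |τ|^3 := by
  have habs0 : (0:ℝ) ≤ |τ| := abs_nonneg _
  have hτu : τ ≤ |τ| := le_abs_self τ
  have hτl : -|τ| ≤ τ := neg_abs_le τ
  have hτ2 : τ^2 = |τ|^2 := (sq_abs τ).symm
  have hτ4 : τ^4 ≤ |τ|^3 / 2 := by
    have h4 : τ^4 = |τ|^4 := by rw [← abs_pow]; exact (abs_of_nonneg (by positivity)).symm
    nlinarith [pow_nonneg habs0 3]
  have hτ40 : 0 ≤ τ^4 := by positivity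
  have hτ3u : τ^3 ≤ |τ|^3 := by
    calc τ^3 ≤ |τ^3| := le_abs_self _
      _ = |τ|^3 := abs_pow τ 3
  have hτ3l : -(|τ|^3) ≤ τ^3 := by
    have := neg_abs_le (τ^3)
    rwa [abs_pow] at this
  have hkey : (s - p) * (s + p) = τ^3/8 - τ^4/64 := by
    have h5 : s^2 - p^2 = τ^3/8 - τ^4/64 := by rw [hs2, hp]; ring
    nlinarith [h5]
  have hpl : (7:ℝ)/10 ≤ p := by rw [hp]; nlinarith
  have hsl : (7:ℝ)/10 ≤ s := by nlinarith [sq_nonneg (s - 7/10)]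
  have hsp : 1 ≤ s + p := by linarith
  rcases le_total p s with hps | hps
  · rw [abs_of_nonneg (by linarith)]
    nlinarith [mul_nonneg (sub_nonneg.2 hps) (by linarith : (0:ℝ) ≤ s + p - 1)]
  · rw [abs_of_nonpos (by linarith)]
    nlinarith [mul_nonneg (sub_nonneg.2 hps) (by linarith : (0:ℝ) ≤ s + p - 1)]

lemma sqrt_taylor (b τ : ℝ) (hb : 0 ≤ b) (h1 : -1 < τ) (h2 : |τ| ≤ b) :
    |Real.sqrt (1+τ) - (1 + τ/2 - τ^2/8)| ≤ (9 + 8*Real.sqrt (1+b) + 4*b + b^2) * |τ|^3 := by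
  have hs0 : 0 ≤ Real.sqrt (1+τ) := Real.sqrt_nonneg _
  have hs2 : Real.sqrt (1+τ)^2 = 1 + τ := Real.sq_sqrt (by linarith)
  have hsb0 : 0 ≤ Real.sqrt (1+b) := Real.sqrt_nonneg _
  have hcoeff1 : 1 ≤ 9 + 8*Real.sqrt (1+b) + 4*b + b^2 := by nlinarith
  have habs0 : (0:ℝ) ≤ |τ| := abs_nonneg _
  rcases le_or_gt |τ| (1/2) with hcase | hcase
  · calc |Real.sqrt (1+τ) - (1 + τ/2 - τ^2/8)| ≤ |τ|^3 :=
          sqrt_taylor_small τ _ _ hs0 hs2 rfl hcase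
      _ = 1 * |τ|^3 := (one_mul _).symm
      _ ≤ (9 + 8*Real.sqrt (1+b) + 4*b + b^2) * |τ|^3 :=
          mul_le_mul_of_nonneg_right hcoeff1 (by positivity)
  · have hsub : Real.sqrt (1+τ) ≤ Real.sqrt (1+b) := by
      apply Real.sqrt_le_sqrt
      have := le_abs_self τ
      linarith
    have hpb : |1 + τ/2 - τ^2/8| ≤ 1 + b/2 + b^2/8 := by
      have h2' : τ^2 ≤ b^2 := by
        rw [← sq_abs]
        exact pow_le_pow_left₀ habs0 h2 2
      have hu := le_abs_self τ
      have hl := neg_abs_le τ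
      have h0 : (0:ℝ) ≤ τ^2 := sq_nonneg τ
      rw [abs_le]
      constructor
      · linarith
      · linarith
    have hM : |Real.sqrt (1+τ) - (1 + τ/2 - τ^2/8)| ≤
        Real.sqrt (1+b) + (1 + b/2 + b^2/8) := by
      calc |Real.sqrt (1+τ) - (1 + τ/2 - τ^2/8)| ≤ |Real.sqrt (1+τ)| + |1 + τ/2 - τ^2/8| :=
            abs_sub _ _
        _ ≤ Real.sqrt (1+b) + (1 + b/2 + b^2/8) := by
            rw [abs_of_nonneg hs0]; exact add_le_add hsub hpb
    have h18 : (1/8 : ℝ) ≤ |τ|^3 := by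
      have h := pow_le_pow_left₀ (by norm_num : (0:ℝ) ≤ 1/2) hcase.le 3
      norm_num at h
      linarith
    have hc0 : (0:ℝ) ≤ 9 + 8*Real.sqrt (1+b) + 4*b + b^2 := by linarith
    linarith [mul_le_mul_of_nonneg_left h18 hc0, hM]


-- indicator product
lemma prod_ind {m : ℕ} (σ : Equiv.Perm (Fin m)) (T : Finset (Fin m)) :
    ∏ i ∈ T, (if σ i = i then (1:ℝ) else 0) = if ∀ i ∈ T, σ i = i then 1 else 0 := by
  by_cases h : ∀ i ∈ T, σ i = i
  · rw [if_pos h]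
    apply Finset.prod_eq_one
    intro i hi
    rw [if_pos (h i hi)]
  · rw [if_neg h]
    push_neg at h
    obtain ⟨i, hi, hne⟩ := h
    exact Finset.prod_eq_zero hi (if_neg hne)

lemma fix_empty {m : ℕ} (σ : Equiv.Perm (Fin m))
    (h : ∀ i ∈ Finset.univ \ (∅ : Finset (Fin m)), σ i = i) : σ = 1 := by
  refine Equiv.ext fun i => ?_
  simpa using h i (by simp)

lemma fix_singleton {m : ℕ} (σ : Equiv.Perm (Fin m)) (a : Fin m)
    (h : ∀ i ∈ Finset.univ \ ({a} : Finset (Fin m)), σ i = i) : σ = 1 := by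
  have ha : σ a = a := by
    by_contra hne
    have h1 : σ (σ a) = σ a := h (σ a) (by simp [hne])
    exact hne (σ.injective h1)
  refine Equiv.ext fun i => ?_
  by_cases hi : i = a
  · simp [hi, ha]
  · simpa using h i (by simp [hi])

lemma fix_pair {m : ℕ} (σ : Equiv.Perm (Fin m)) (a b : Fin m) (hab : a ≠ b)
    (h : ∀ i ∈ Finset.univ \ ({a, b} : Finset (Fin m)), σ i = i) :
    σ = 1 ∨ σ = Equiv.swap a b := by
  have hmem : ∀ i, i ≠ a → i ≠ b → σ i = i := by
    intro i h1 h2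
    exact h i (by simp [h1, h2])
  have hσa : σ a = a ∨ σ a = b := by
    by_contra hc
    push_neg at hc
    have := hmem (σ a) hc.1 hc.2
    exact hc.1 (σ.injective this)
  have hσb : σ b = a ∨ σ b = b := by
    by_contra hc
    push_neg at hc
    have := hmem (σ b) hc.1 hc.2
    exact hc.2 (σ.injective this)
  rcases hσa with ha | ha
  · left
    refine Equiv.ext fun i => ?_
    by_cases h1 : i = a
    · simp [h1, ha]
    by_cases h2 : i = b
    · rcases hσb with hb | hb
      · exact absurd (σ.injective (hb.trans ha.symm)) (fun hh => hab hh.symm)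
      · simp [h2, hb]
    · simp [hmem i h1 h2]
  · right
    have hb : σ b = a := by
      rcases hσb with hb | hb
      · exact hb
      · exact absurd (σ.injective (ha.trans hb.symm)) hab
    refine Equiv.ext fun i => ?_
    by_cases h1 : i = a
    · simp [h1, ha, Equiv.swap_apply_left]
    by_cases h2 : i = b
    · simp [h2, hb, Equiv.swap_apply_right]
    · simp [hmem i h1 h2, Equiv.swap_apply_of_ne_of_ne h1 h2]

-- sum over 2-element subsets
lemma sum_pairs {m : ℕ} (f : Finset (Fin m) → ℝ) :
    ∑ S ∈ Finset.powersetCard 2 Finset.univ, f S = ∑ a, ∑ b ∈ Finset.Ioi a, f {a, b} := by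
  rw [Finset.sum_sigma']
  symm
  apply Finset.sum_bij (fun (x : (_ : Fin m) × Fin m) _ => ({x.1, x.2} : Finset (Fin m)))
  · rintro ⟨a, b⟩ hx
    rw [Finset.mem_sigma] at hx
    have hab : a < b := Finset.mem_Ioi.mp hx.2
    rw [Finset.mem_powersetCard]
    exact ⟨Finset.subset_univ _, Finset.card_pair hab.ne⟩
  · rintro ⟨a, b⟩ hx ⟨c, d⟩ hy hEq
    rw [Finset.mem_sigma] at hx hy
    have hab : a < b := Finset.mem_Ioi.mp hx.2
    have hcd : c < d := Finset.mem_Ioi.mp hy.2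
    have hac : a = c := by
      have h1 : a ∈ ({c, d} : Finset (Fin m)) := by
        rw [← hEq]; simp
      have h2 : c ∈ ({a, b} : Finset (Fin m)) := by
        rw [hEq]; simp
      simp only [Finset.mem_insert, Finset.mem_singleton] at h1 h2
      rcases h1 with h1 | h1
      · exact h1
      · rcases h2 with h2 | h2
        · exact h2.symm
        · exfalso
          have h3 : a < c := by rw [h2]; exact hab
          have h4 : c < a := by rw [h1]; exact hcd
          exact absurd (h3.trans h4) (lt_irrefl a)
    have hbd : b = d := by
      have h1 : b ∈ ({c, d} : Finset (Fin m)) := by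
        rw [← hEq]; simp
      simp only [Finset.mem_insert, Finset.mem_singleton] at h1
      rcases h1 with h1 | h1
      · exfalso; rw [h1, ← hac] at hab; exact lt_irrefl a hab
      · exact h1
    subst hac; subst hbd; rfl
  · intro S hS
    rw [Finset.mem_powersetCard] at hS
    obtain ⟨x, y, hxy, rfl⟩ := Finset.card_eq_two.mp hS.2
    rcases lt_or_gt_of_ne hxy with hlt | hgt
    · exact ⟨⟨x, y⟩, Finset.mem_sigma.mpr ⟨Finset.mem_univ _, Finset.mem_Ioi.mpr hlt⟩, rfl⟩
    · exact ⟨⟨y, x⟩, Finset.mem_sigma.mpr ⟨Finset.mem_univ _, Finset.mem_Ioi.mpr hgt⟩,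
        Finset.pair_comm y x⟩
  · intros; rfl

-- splitting sums over subsets of card ≤ 2
lemma sum_card_le_two {m : ℕ} (f : Finset (Fin m) → ℝ) :
    ∑ S ∈ (Finset.univ : Finset (Fin m)).powerset.filter (fun S => S.card ≤ 2), f S =
      f ∅ + (∑ a, f {a}) + ∑ a, ∑ b ∈ Finset.Ioi a, f {a, b} := by
  have hsplit : ∑ S ∈ (Finset.univ : Finset (Fin m)).powerset.filter (fun S => S.card ≤ 2), f S =
      (∑ S ∈ Finset.powersetCard 0 (Finset.univ : Finset (Fin m)), f S)
      + (∑ S ∈ Finset.powersetCard 1 (Finset.univ : Finset (Fin m)), f S)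
      + (∑ S ∈ Finset.powersetCard 2 (Finset.univ : Finset (Fin m)), f S) := by
    simp only [Finset.powersetCard_eq_filter, Finset.sum_filter]
    rw [← Finset.sum_add_distrib, ← Finset.sum_add_distrib]
    apply Finset.sum_congr rfl
    intro S _
    by_cases h0 : S.card = 0
    · simp [h0]
    by_cases h1 : S.card = 1
    · simp [h1]
    by_cases h2 : S.card = 2
    · simp [h2]
    · have : ¬ S.card ≤ 2 := by omega
      simp [h0, h1, h2, this]
  rw [hsplit, Finset.powersetCard_zero, Finset.sum_singleton, Finset.powersetCard_one,
    Finset.sum_map, sum_pairs]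
  rfl


noncomputable def GG {m : ℕ} (X : Matrix (Fin m) (Fin m) ℝ) (S : Finset (Fin m)) : ℝ :=
  ∑ σ : Equiv.Perm (Fin m), ((Equiv.Perm.sign σ : ℤ) : ℝ) *
    ((∏ i ∈ S, X (σ i) i) * ∏ i ∈ Finset.univ \ S, (if σ i = i then (1:ℝ) else 0))

lemma GG_empty {m : ℕ} (X : Matrix (Fin m) (Fin m) ℝ) : GG X ∅ = 1 := by
  rw [GG, Finset.sum_eq_single_of_mem (1 : Equiv.Perm (Fin m)) (Finset.mem_univ _)]
  · simp [prod_ind]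
  · intro σ _ hσ
    rw [prod_ind, if_neg (fun hall => hσ (fix_empty σ hall))]
    ring

lemma GG_singleton {m : ℕ} (X : Matrix (Fin m) (Fin m) ℝ) (a : Fin m) :
    GG X {a} = X a a := by
  rw [GG, Finset.sum_eq_single_of_mem (1 : Equiv.Perm (Fin m)) (Finset.mem_univ _)]
  · simp [prod_ind]
  · intro σ _ hσ
    rw [prod_ind, if_neg (fun hall => hσ (fix_singleton σ a hall))]
    ring

lemma GG_pair {m : ℕ} (X : Matrix (Fin m) (Fin m) ℝ) (a b : Fin m) (hab : a ≠ b) :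
    GG X {a, b} = X a a * X b b - X a b * X b a := by
  have hne : (1 : Equiv.Perm (Fin m)) ≠ Equiv.swap a b := by
    intro h
    exact hab (Equiv.swap_eq_one_iff.mp h.symm)
  rw [GG, ← Finset.sum_subset (Finset.subset_univ ({1, Equiv.swap a b} : Finset (Equiv.Perm (Fin m))))
    (fun σ _ hσ => by
      rw [prod_ind, if_neg]
      · ring
      · intro hall
        rcases fix_pair σ a b hab hall with h | h <;> simp [h] at hσ)]
  rw [Finset.sum_pair hne]
  have e1 : ∀ i ∈ Finset.univ \ ({a, b} : Finset (Fin m)), (1 : Equiv.Perm (Fin m)) i = i :=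
    fun i _ => rfl
  have e2 : ∀ i ∈ Finset.univ \ ({a, b} : Finset (Fin m)), Equiv.swap a b i = i := by
    intro i hi
    simp only [Finset.mem_sdiff, Finset.mem_insert, Finset.mem_singleton] at hi
    push_neg at hi
    exact Equiv.swap_apply_of_ne_of_ne hi.2.1 hi.2.2
  rw [prod_ind, prod_ind, if_pos e1, if_pos e2, Finset.prod_pair hab, Finset.prod_pair hab]
  simp only [Equiv.Perm.one_apply, Equiv.Perm.sign_one, Equiv.Perm.sign_swap hab,
    Equiv.swap_apply_left, Equiv.swap_apply_right]
  push_cast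
  ring

lemma det_eq_sum_GG {m : ℕ} (X : Matrix (Fin m) (Fin m) ℝ) :
    (1 + X).det = ∑ S ∈ (Finset.univ : Finset (Fin m)).powerset, GG X S := by
  rw [Matrix.det_apply']
  have hentry : ∀ (σ : Equiv.Perm (Fin m)),
      ∏ i, (1 + X) (σ i) i
        = ∑ S ∈ (Finset.univ : Finset (Fin m)).powerset,
            (∏ i ∈ S, X (σ i) i) * ∏ i ∈ Finset.univ \ S, (if σ i = i then (1:ℝ) else 0) := by
    intro σ
    rw [← Finset.prod_add]
    apply Finset.prod_congr rfl
    intro i _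
    simp [Matrix.add_apply, Matrix.one_apply, add_comm]
  calc ∑ σ : Equiv.Perm (Fin m), ((Equiv.Perm.sign σ : ℤ) : ℝ) * ∏ i, (1 + X) (σ i) i
      = ∑ σ : Equiv.Perm (Fin m), ∑ S ∈ (Finset.univ : Finset (Fin m)).powerset,
          ((Equiv.Perm.sign σ : ℤ) : ℝ) *
            ((∏ i ∈ S, X (σ i) i) * ∏ i ∈ Finset.univ \ S, (if σ i = i then (1:ℝ) else 0)) := by
        apply Finset.sum_congr rfl
        intro σ _
        rw [hentry σ, Finset.mul_sum]
    _ = _ := by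
        rw [Finset.sum_comm]
        rfl

lemma term_bound {m : ℕ} (X : Matrix (Fin m) (Fin m) ℝ) (hN1 : hsNorm X ≤ 1)
    (σ : Equiv.Perm (Fin m)) (S : Finset (Fin m)) (hS : 3 ≤ S.card) :
    |((Equiv.Perm.sign σ : ℤ) : ℝ) *
      ((∏ i ∈ S, X (σ i) i) * ∏ i ∈ Finset.univ \ S, (if σ i = i then (1:ℝ) else 0))|
      ≤ hsNorm X ^ 3 := by
  have hN0 := hsNorm_nonneg X
  have hsign : |((Equiv.Perm.sign σ : ℤ) : ℝ)| = 1 := by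
    rcases Int.units_eq_one_or (Equiv.Perm.sign σ) with h | h <;> simp [h]
  rw [abs_mul, abs_mul, hsign, one_mul]
  have h1 : |∏ i ∈ S, X (σ i) i| ≤ hsNorm X ^ S.card := by
    rw [Finset.abs_prod]
    calc ∏ i ∈ S, |X (σ i) i| ≤ ∏ i ∈ S, hsNorm X :=
          Finset.prod_le_prod (fun i _ => abs_nonneg _) (fun i _ => entry_le X (σ i) i)
      _ = hsNorm X ^ S.card := Finset.prod_const _
  have h2 : |∏ i ∈ Finset.univ \ S, (if σ i = i then (1:ℝ) else 0)| ≤ 1 := by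
    rw [prod_ind]
    split <;> simp
  have h3 : hsNorm X ^ S.card ≤ hsNorm X ^ 3 := pow_le_pow_of_le_one hN0 hN1 hS
  calc |∏ i ∈ S, X (σ i) i| * |∏ i ∈ Finset.univ \ S, (if σ i = i then (1:ℝ) else 0)|
      ≤ (hsNorm X ^ 3) * 1 := by
        apply mul_le_mul (h1.trans h3) h2 (abs_nonneg _) (by positivity)
    _ = hsNorm X ^ 3 := mul_one _

lemma det_expand {m : ℕ} (X : Matrix (Fin m) (Fin m) ℝ) (hN1 : hsNorm X ≤ 1) :
    |(1 + X).det - (1 + X.trace + E2 X)|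
      ≤ (m.factorial : ℝ) * 2 ^ m * hsNorm X ^ 3 := by
  have hN0 := hsNorm_nonneg X
  rw [det_eq_sum_GG,
    ← Finset.sum_filter_add_sum_filter_not ((Finset.univ : Finset (Fin m)).powerset)
      (fun S => S.card ≤ 2) (GG X)]
  have hsmall : ∑ S ∈ (Finset.univ : Finset (Fin m)).powerset.filter (fun S => S.card ≤ 2),
      GG X S = 1 + X.trace + E2 X := by
    rw [sum_card_le_two (GG X), GG_empty]
    congr 1
    · congr 1
      · rw [Matrix.trace]
        apply Finset.sum_congr rfl
        intro a _
        exact GG_singleton X a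
    · rw [E2]
      apply Finset.sum_congr rfl
      intro a _
      apply Finset.sum_congr rfl
      intro b hb
      exact GG_pair X a b (Finset.mem_Ioi.mp hb).ne
  rw [hsmall]
  have hbig : |∑ S ∈ (Finset.univ : Finset (Fin m)).powerset.filter (fun S => ¬ S.card ≤ 2),
      GG X S| ≤ (m.factorial : ℝ) * 2 ^ m * hsNorm X ^ 3 := by
    calc |∑ S ∈ (Finset.univ : Finset (Fin m)).powerset.filter (fun S => ¬ S.card ≤ 2), GG X S|
        ≤ ∑ S ∈ (Finset.univ : Finset (Fin m)).powerset.filter (fun S => ¬ S.card ≤ 2), |GG X S| :=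
          Finset.abs_sum_le_sum_abs _ _
      _ ≤ ∑ S ∈ (Finset.univ : Finset (Fin m)).powerset.filter (fun S => ¬ S.card ≤ 2),
            ((m.factorial : ℝ) * hsNorm X ^ 3) := by
          apply Finset.sum_le_sum
          intro S hS
          rw [Finset.mem_filter] at hS
          have hS3 : 3 ≤ S.card := by omega
          calc |GG X S| ≤ ∑ σ : Equiv.Perm (Fin m), |((Equiv.Perm.sign σ : ℤ) : ℝ) *
                ((∏ i ∈ S, X (σ i) i) * ∏ i ∈ Finset.univ \ S, (if σ i = i then (1:ℝ) else 0))| :=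
                Finset.abs_sum_le_sum_abs _ _
            _ ≤ ∑ _σ : Equiv.Perm (Fin m), hsNorm X ^ 3 :=
                Finset.sum_le_sum (fun σ _ => term_bound X hN1 σ S hS3)
            _ = (m.factorial : ℝ) * hsNorm X ^ 3 := by
                rw [Finset.sum_const, Finset.card_univ, Fintype.card_perm, Fintype.card_fin,
                  nsmul_eq_mul]
      _ ≤ (m.factorial : ℝ) * 2 ^ m * hsNorm X ^ 3 := by
          rw [Finset.sum_const, nsmul_eq_mul]
          have hcard : (((Finset.univ : Finset (Fin m)).powerset.filter
              (fun S => ¬ S.card ≤ 2)).card : ℝ) ≤ 2 ^ m := by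
            have h1 : ((Finset.univ : Finset (Fin m)).powerset.filter
                (fun S => ¬ S.card ≤ 2)).card ≤ (Finset.univ : Finset (Fin m)).powerset.card :=
              Finset.card_filter_le _ _
            have h2 : (Finset.univ : Finset (Fin m)).powerset.card = 2 ^ m := by
              rw [Finset.card_powerset, Finset.card_univ, Fintype.card_fin]
            calc (((Finset.univ : Finset (Fin m)).powerset.filter
                (fun S => ¬ S.card ≤ 2)).card : ℝ) ≤ ((2:ℕ) ^ m : ℝ) := by
                  exact_mod_cast h1.trans h2.le
              _ = 2 ^ m := by push_cast; ring
          have hfac0 : (0:ℝ) ≤ (m.factorial : ℝ) := by positivity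
          have hx3 : (0:ℝ) ≤ hsNorm X ^ 3 := by positivity
          calc (((Finset.univ : Finset (Fin m)).powerset.filter
              (fun S => ¬ S.card ≤ 2)).card : ℝ) * ((m.factorial : ℝ) * hsNorm X ^ 3)
              ≤ (2 ^ m : ℝ) * ((m.factorial : ℝ) * hsNorm X ^ 3) := by
                apply mul_le_mul_of_nonneg_right hcard (by positivity)
            _ = (m.factorial : ℝ) * 2 ^ m * hsNorm X ^ 3 := by ring
  calc |1 + X.trace + E2 X + (∑ S ∈ (Finset.univ : Finset (Fin m)).powerset.filter
        (fun S => ¬ S.card ≤ 2), GG X S) - (1 + X.trace + E2 X)|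
      = |∑ S ∈ (Finset.univ : Finset (Fin m)).powerset.filter
          (fun S => ¬ S.card ≤ 2), GG X S| := by ring_nf
    _ ≤ _ := hbig

lemma trace_bound {m : ℕ} (X : Matrix (Fin m) (Fin m) ℝ) :
    |X.trace| ≤ (m : ℝ) * hsNorm X := by
  rw [Matrix.trace]
  calc |∑ i, X.diag i| ≤ ∑ i, |X i i| := Finset.abs_sum_le_sum_abs _ _
    _ ≤ ∑ _i : Fin m, hsNorm X := Finset.sum_le_sum (fun i _ => entry_le X i i)
    _ = (m : ℝ) * hsNorm X := by
        rw [Finset.sum_const, Finset.card_univ, Fintype.card_fin, nsmul_eq_mul]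

lemma E2_bound {m : ℕ} (X : Matrix (Fin m) (Fin m) ℝ) :
    |E2 X| ≤ 2 * (m : ℝ)^2 * hsNorm X ^ 2 := by
  have hN0 := hsNorm_nonneg X
  rw [E2]
  calc |∑ i, ∑ j ∈ Finset.Ioi i, (X i i * X j j - X i j * X j i)|
      ≤ ∑ i, |∑ j ∈ Finset.Ioi i, (X i i * X j j - X i j * X j i)| :=
        Finset.abs_sum_le_sum_abs _ _
    _ ≤ ∑ i : Fin m, ∑ j ∈ Finset.Ioi i, |X i i * X j j - X i j * X j i| :=
        Finset.sum_le_sum (fun i _ => Finset.abs_sum_le_sum_abs _ _)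
    _ ≤ ∑ _i : Fin m, ∑ _j : Fin m, 2 * hsNorm X ^ 2 := by
        apply Finset.sum_le_sum
        intro i _
        apply le_trans (Finset.sum_le_sum (g := fun _ => 2 * hsNorm X ^ 2) ?_)
        · apply Finset.sum_le_sum_of_subset_of_nonneg (Finset.subset_univ _)
          intro j _ _
          positivity
        · intro j _
          have h1 : |X i i * X j j| ≤ hsNorm X * hsNorm X := by
            rw [abs_mul]
            exact mul_le_mul (entry_le X i i) (entry_le X j j) (abs_nonneg _) hN0
          have h2 : |X i j * X j i| ≤ hsNorm X * hsNorm X := by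
            rw [abs_mul]
            exact mul_le_mul (entry_le X i j) (entry_le X j i) (abs_nonneg _) hN0
          calc |X i i * X j j - X i j * X j i| ≤ |X i i * X j j| + |X i j * X j i| :=
                abs_sub _ _
            _ ≤ 2 * hsNorm X ^ 2 := by nlinarith
    _ = 2 * (m : ℝ)^2 * hsNorm X ^ 2 := by
        simp [Finset.sum_const, Finset.card_univ, Fintype.card_fin, nsmul_eq_mul]
        ring


set_option maxHeartbeats 1600000 in

lemma assemble (mr K3 N d tr e2 : ℝ) (hmr : 0 ≤ mr) (hK31 : 1 ≤ K3)
    (hN0 : 0 ≤ N) (hN1 : N ≤ 1) (hd : 0 < d)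
    (htr : |tr| ≤ mr * N) (he2 : |e2| ≤ 2 * mr^2 * N^2)
    (hR : |d - 1 - tr - e2| ≤ K3 * N^3) :
    |Real.sqrt d - 1 - (1/2) * tr - (1/2) * e2 + (1/8) * tr^2|
      ≤ ((9 + 8*Real.sqrt (1+(mr+2*mr^2+K3)) + 4*(mr+2*mr^2+K3) + (mr+2*mr^2+K3)^2)
          * (mr+2*mr^2+K3)^3
         + (K3/2 + (2*mr*(2*mr^2+K3) + (2*mr^2+K3)^2)/8) + 1) * N^3 := by
  have hK30 : (0:ℝ) ≤ K3 := by linarith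
  set b : ℝ := mr + 2*mr^2 + K3 with hbdef
  have hb0 : 0 ≤ b := by positivity
  set cb : ℝ := 9 + 8*Real.sqrt (1+b) + 4*b + b^2 with hcbdef
  have hcb0 : 0 ≤ cb := by positivity
  have hN32 : N^3 ≤ N^2 := by nlinarith
  have hN21 : N^2 ≤ N := by nlinarith
  have hN43 : N^4 ≤ N^3 := by nlinarith
  have hτ : |d - 1| ≤ b * N := by
    have h1 : 2*mr^2*N^2 ≤ 2*mr^2*N := by nlinarith
    have h2 : K3*N^3 ≤ K3*N := by nlinarith
    have hsplit : d - 1 = tr + e2 + (d - 1 - tr - e2) := by ring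
    rw [hsplit]
    calc |tr + e2 + (d - 1 - tr - e2)| ≤ |tr| + |e2| + |d - 1 - tr - e2| := abs_add_three _ _ _
      _ ≤ mr*N + 2*mr^2*N^2 + K3*N^3 := by linarith
      _ ≤ b * N := by rw [hbdef]; linarith
  have hτb : |d - 1| ≤ b := by
    have : b * N ≤ b * 1 := mul_le_mul_of_nonneg_left hN1 hb0
    linarith
  have hτgt : -1 < d - 1 := by linarith
  have hsq := sqrt_taylor b (d - 1) hb0 hτgt hτb
  have hsq2 : |Real.sqrt (1 + (d-1)) - (1 + (d-1)/2 - (d-1)^2/8)| ≤ cb * b^3 * N^3 := by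
    have hcube : |d-1|^3 ≤ (b*N)^3 := pow_le_pow_left₀ (abs_nonneg _) hτ 3
    calc |Real.sqrt (1 + (d-1)) - (1 + (d-1)/2 - (d-1)^2/8)| ≤ cb * |d-1|^3 := hsq
      _ ≤ cb * (b*N)^3 := mul_le_mul_of_nonneg_left hcube hcb0
      _ = cb * b^3 * N^3 := by ring
  have hu : |d - 1 - tr| ≤ (2*mr^2 + K3) * N^2 := by
    have h1 : K3*N^3 ≤ K3*N^2 := by nlinarith
    have hsplit : d - 1 - tr = e2 + (d - 1 - tr - e2) := by ring
    rw [hsplit]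
    calc |e2 + (d - 1 - tr - e2)| ≤ |e2| + |d - 1 - tr - e2| := abs_add_le _ _
      _ ≤ 2*mr^2*N^2 + K3*N^3 := by linarith
      _ ≤ (2*mr^2 + K3) * N^2 := by linarith
  have h2 : |tr * (d - 1 - tr)| ≤ (mr*N) * ((2*mr^2 + K3) * N^2) := by
    rw [abs_mul]
    exact mul_le_mul htr hu (abs_nonneg _) (by positivity)
  have h3 : |(d - 1 - tr)^2| ≤ ((2*mr^2 + K3) * N^2)^2 := by
    rw [abs_pow]
    exact pow_le_pow_left₀ (abs_nonneg _) hu 2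
  have h4 : (2*mr^2 + K3)^2 * N^4 ≤ (2*mr^2 + K3)^2 * N^3 :=
    mul_le_mul_of_nonneg_left hN43 (by positivity)
  have hsecond : |(d - 1 - tr - e2)/2 - (2*tr*(d - 1 - tr) + (d - 1 - tr)^2)/8|
      ≤ (K3/2 + (2*mr*(2*mr^2 + K3) + (2*mr^2 + K3)^2)/8) * N^3 := by
    rw [abs_le]
    constructor <;>
      linarith [le_abs_self (d - 1 - tr - e2), neg_abs_le (d - 1 - tr - e2),
        le_abs_self (tr * (d - 1 - tr)), neg_abs_le (tr * (d - 1 - tr)),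
        le_abs_self ((d - 1 - tr)^2), neg_abs_le ((d - 1 - tr)^2), hR, h2, h3, h4]
  have key : Real.sqrt d - 1 - (1/2) * tr - (1/2) * e2 + (1/8) * tr^2
      = (Real.sqrt (1 + (d-1)) - (1 + (d-1)/2 - (d-1)^2/8))
        + ((d - 1 - tr - e2)/2 - (2*tr*(d - 1 - tr) + (d - 1 - tr)^2)/8) := by
    rw [show (1:ℝ) + (d-1) = d by ring]
    ring
  rw [key]
  have hN3 : (0:ℝ) ≤ N^3 := by positivity
  calc |(Real.sqrt (1 + (d-1)) - (1 + (d-1)/2 - (d-1)^2/8))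
      + ((d - 1 - tr - e2)/2 - (2*tr*(d - 1 - tr) + (d - 1 - tr)^2)/8)|
      ≤ |Real.sqrt (1 + (d-1)) - (1 + (d-1)/2 - (d-1)^2/8)|
        + |(d - 1 - tr - e2)/2 - (2*tr*(d - 1 - tr) + (d - 1 - tr)^2)/8| := abs_add_le _ _
    _ ≤ cb * b^3 * N^3 + (K3/2 + (2*mr*(2*mr^2 + K3) + (2*mr^2 + K3)^2)/8) * N^3 :=
        add_le_add hsq2 hsecond
    _ ≤ (cb * b^3 + (K3/2 + (2*mr*(2*mr^2 + K3) + (2*mr^2 + K3)^2)/8) + 1) * N^3 := by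
        nlinarith


set_option maxHeartbeats 1600000 in
/-- For every positive integer `m` there exists `C > 0`, depending only on `m`,
such that for every real `m×m` matrix `X` with `‖X‖ ≤ 1/2` one has `det(Iₘ + X) > 0` and
`|√(det(Iₘ + X)) − 1 − (1/2) tr X − (1/2) E₂(X) + (1/8)(tr X)²| ≤ C ‖X‖³`. -/
theorem sqrt_det_expansion (m : ℕ) (hm : 0 < m) :
    ∃ C : ℝ, 0 < C ∧
      ∀ X : Matrix (Fin m) (Fin m) ℝ, hsNorm X ≤ 1 / 2 →
        0 < (1 + X).det ∧
        |Real.sqrt ((1 + X).det) - 1 - (1 / 2) * X.trace - (1 / 2) * E2 X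
            + (1 / 8) * X.trace ^ 2| ≤ C * (hsNorm X) ^ 3 := by

  set mr : ℝ := (m : ℝ) with hmrdef
  have hmr : 0 ≤ mr := by positivity
  set K3 : ℝ := (m.factorial : ℝ) * 2 ^ m with hK3def
  have hK31 : 1 ≤ K3 := by
    have h1 : (1:ℝ) ≤ (m.factorial : ℝ) := by
      exact_mod_cast Nat.one_le_iff_ne_zero.mpr (Nat.factorial_pos m).ne'
    have h2 : (1:ℝ) ≤ 2 ^ m := one_le_pow₀ (by norm_num)
    calc (1:ℝ) = 1 * 1 := by norm_num
      _ ≤ (m.factorial : ℝ) * 2 ^ m := mul_le_mul h1 h2 (by norm_num) (by linarith)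
  refine ⟨(9 + 8*Real.sqrt (1+(mr+2*mr^2+K3)) + 4*(mr+2*mr^2+K3) + (mr+2*mr^2+K3)^2)
          * (mr+2*mr^2+K3)^3
         + (K3/2 + (2*mr*(2*mr^2+K3) + (2*mr^2+K3)^2)/8) + 1, ?_, ?_⟩
  · have hK30 : (0:ℝ) ≤ K3 := by linarith
    positivity
  intro X hNhalf
  have hN0 := hsNorm_nonneg X
  have hN1 : hsNorm X ≤ 1 := by linarith
  have hdetpos : 0 < (1 + X).det := det_one_add_pos X (by linarith)
  refine ⟨hdetpos, ?_⟩
  have hR : |(1 + X).det - 1 - X.trace - E2 X| ≤ K3 * hsNorm X ^ 3 := by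
    have h := det_expand X hN1
    have heq : (1 + X).det - 1 - X.trace - E2 X = (1 + X).det - (1 + X.trace + E2 X) := by ring
    rw [heq, hK3def]
    exact h
  exact assemble mr K3 (hsNorm X) ((1 + X).det) X.trace (E2 X) hmr hK31 hN0 hN1 hdetpos
    (trace_bound X) (E2_bound X) hR
end
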